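/- arXiv:1401.8210 — 8 statements merged into one kernel-verified Lean document; each statement's English description precedes it below -/
import Mathlib

section
/- Let A be a square integer matrix with an integer eigenvalue a of geometric multiplicity m (over ℚ). Then at least m of the invariant factors of A are divisible by a. -/
open Matrix

private lemma castVec_mulVec {n : ℕ} (M : Matrix (Fin n) (Fin n) ℤ) (x : Fin n → ℤ) :
    (M.map ((↑) : ℤ → ℚ)).mulVec (fun i => (x i : ℚ)) = fun i => ((M.mulVec x) i : ℚ) := by
  funext i; simp [Matrix.mulVec, dotProduct]

private lemma exists_prime_pow_dvd_not_dvd {a b : ℤ} (h : ¬ a ∣ b) :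
    ∃ (p e : ℕ), p.Prime ∧ (p:ℤ)^e ∣ a ∧ ¬ (p:ℤ)^e ∣ b := by
  have hb : b ≠ 0 := by rintro rfl; exact h (dvd_zero a)
  have hk : b.natAbs ≠ 0 := Int.natAbs_ne_zero.mpr hb
  by_cases ha : a = 0
  · refine ⟨2, b.natAbs.factorization 2 + 1, Nat.prime_two, by simp [ha], ?_⟩
    intro hdvd
    rw [← Int.natAbs_dvd_natAbs] at hdvd
    simp only [Int.natAbs_pow, Int.natAbs_natCast] at hdvd
    exact Nat.pow_succ_factorization_not_dvd hk Nat.prime_two hdvd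
  · have hm : a.natAbs ≠ 0 := Int.natAbs_ne_zero.mpr ha
    have hnd : ¬ a.natAbs ∣ b.natAbs := fun hc => h (Int.natAbs_dvd_natAbs.mp hc)
    rw [← Nat.factorization_le_iff_dvd hm hk] at hnd
    obtain ⟨p, hp⟩ : ∃ p, b.natAbs.factorization p < a.natAbs.factorization p := by
      by_contra hc
      push_neg at hc
      exact hnd (Finsupp.le_def.mpr hc)
    have hpprime : p.Prime := by
      by_contra hpp
      rw [Nat.factorization_eq_zero_of_not_prime a.natAbs hpp] at hp
      omega
    refine ⟨p, a.natAbs.factorization p, hpprime, ?_, ?_⟩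
    · have h1 := Nat.ordProj_dvd a.natAbs p
      have h2 : ((p:ℤ) ^ a.natAbs.factorization p).natAbs ∣ a.natAbs := by
        simpa [Int.natAbs_pow] using h1
      exact Int.natAbs_dvd_natAbs.mp h2
    · intro hdvd
      rw [← Int.natAbs_dvd_natAbs] at hdvd
      simp only [Int.natAbs_pow, Int.natAbs_natCast] at hdvd
      have h2 : p ^ (b.natAbs.factorization p + 1) ∣ b.natAbs :=
        dvd_trans (pow_dvd_pow p hp) hdvd
      exact Nat.pow_succ_factorization_not_dvd hk hpprime h2

private lemma key_int {n : ℕ} (A : Matrix (Fin n) (Fin n) ℤ) (a : ℤ) (d : ℕ → ℤ)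
    (P Q : Matrix (Fin n) (Fin n) ℤ) (hQ : IsUnit Q.det)
    (hD : P * A * Q = Matrix.diagonal fun i : Fin n => d (i : ℕ))
    (hchain : ∀ i j : Fin n, (i:ℕ) ≤ (j:ℕ) → d (i:ℕ) ∣ d (j:ℕ))
    (u : Fin n → ℤ) (hu : A.mulVec u = a • u)
    (hT : ∀ i : Fin n, a ∣ d (i:ℕ) → Q⁻¹.mulVec u i = 0) : u = 0 := by
  classical
  have hQQ : Q * Q⁻¹ = 1 := Matrix.mul_nonsing_inv Q hQ
  -- basic identity : d i * (Q⁻¹ *ᵥ u) i = a * (P *ᵥ u) i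
  have hrec : ∀ v : Fin n → ℤ, A.mulVec v = a • v →
      ∀ i : Fin n, d (i:ℕ) * (Q⁻¹.mulVec v) i = a * (P.mulVec v) i := by
    intro v hv i
    have h1 : (Matrix.diagonal fun i : Fin n => d (i : ℕ)).mulVec (Q⁻¹.mulVec v)
        = a • P.mulVec v := by
      rw [← hD]
      rw [Matrix.mulVec_mulVec, Matrix.mul_assoc (P * A) Q Q⁻¹, hQQ, Matrix.mul_one,
        ← Matrix.mulVec_mulVec, hv]
      rw [Matrix.mulVec_smul]
    have := congrFun h1 i
    rwa [Matrix.mulVec_diagonal] at this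
  by_cases hall : ∀ i : Fin n, a ∣ d (i:ℕ)
  · have hw : Q⁻¹.mulVec u = 0 := funext fun i => hT i (hall i)
    have : u = Q.mulVec (Q⁻¹.mulVec u) := by
      rw [Matrix.mulVec_mulVec, hQQ, Matrix.one_mulVec]
    rw [this, hw, Matrix.mulVec_zero]
  · push_neg at hall
    obtain ⟨j0, hj0⟩ := hall
    set S : Finset (Fin n) := Finset.univ.filter (fun i => ¬ a ∣ d (i:ℕ)) with hS
    have hSne : S.Nonempty := ⟨j0, by simp [hS, hj0]⟩
    set i0 : Fin n := S.max' hSne with hi0def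
    have hi0 : ¬ a ∣ d (i0:ℕ) := by
      have := S.max'_mem hSne
      simp only [hS, Finset.mem_filter] at this
      exact this.2
    obtain ⟨p, e, hp, hpa, hpb⟩ := exists_prime_pow_dvd_not_dvd hi0
    have hpZ : Prime (p:ℤ) := Nat.prime_iff_prime_int.mp hp
    have hpd : ∀ i : Fin n, ¬ a ∣ d (i:ℕ) → ¬ (p:ℤ)^e ∣ d (i:ℕ) := by
      intro i hi hc
      have hiS : i ∈ S := by simp [hS, hi]
      have hle : i ≤ i0 := S.le_max' i hiS
      exact hpb (hc.trans (hchain i i0 hle))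
    -- one step of descent
    have step : ∀ v : Fin n → ℤ, A.mulVec v = a • v →
        (∀ i : Fin n, a ∣ d (i:ℕ) → Q⁻¹.mulVec v i = 0) →
        ∀ i : Fin n, (p:ℤ) ∣ v i := by
      intro v hv hTv i
      have hw : ∀ j : Fin n, (p:ℤ) ∣ Q⁻¹.mulVec v j := by
        intro j
        by_cases hj : a ∣ d (j:ℕ)
        · rw [hTv j hj]
          exact dvd_zero _
        · have h1 : (p:ℤ)^e ∣ d (j:ℕ) * (Q⁻¹.mulVec v) j := by
            rw [hrec v hv j]
            exact hpa.mul_right _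
          by_contra hnd
          exact hpd j hj (hpZ.pow_dvd_of_dvd_mul_right e hnd h1)
      have hvQ : v = Q.mulVec (Q⁻¹.mulVec v) := by
        rw [Matrix.mulVec_mulVec, hQQ, Matrix.one_mulVec]
      rw [hvQ]
      simp only [Matrix.mulVec, dotProduct]
      exact Finset.dvd_sum fun j _ => (hw j).mul_left _
    -- full descent by induction
    have hind : ∀ t : ℕ, ∀ v : Fin n → ℤ, A.mulVec v = a • v →
        (∀ i : Fin n, a ∣ d (i:ℕ) → Q⁻¹.mulVec v i = 0) →
        ∀ i : Fin n, (p:ℤ)^t ∣ v i := by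
      intro t
      induction t with
      | zero => intro v _ _ i; simp
      | succ t ih =>
        intro v hv hTv i
        have h1 : ∀ j : Fin n, (p:ℤ) ∣ v j := step v hv hTv
        set v' : Fin n → ℤ := fun j => v j / p with hv'def
        have hv'e : ∀ j, v j = p * v' j := fun j => (Int.mul_ediv_cancel' (h1 j)).symm
        have hpz : (p:ℤ) ≠ 0 := hpZ.ne_zero
        have hvsmul : v = (p:ℤ) • v' := funext fun j => by
          simpa [Pi.smul_apply, smul_eq_mul] using hv'e j
        have hA' : A.mulVec v' = a • v' := by
          funext j
          have hmain : (p:ℤ) * (A.mulVec v' j) = (p:ℤ) * (a • v') j := by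
            have h2 : A.mulVec v = (p:ℤ) • A.mulVec v' := by
              rw [hvsmul, Matrix.mulVec_smul]
            have h3 := congrFun h2 j
            have h4 := congrFun hv j
            rw [h4] at h3
            have : a • v = (p:ℤ) • (a • v') := by
              rw [hvsmul, smul_comm]
            rw [congrFun this j] at h3
            simpa [Pi.smul_apply, smul_eq_mul] using h3.symm
          exact mul_left_cancel₀ hpz hmain
        have hT' : ∀ j : Fin n, a ∣ d (j:ℕ) → Q⁻¹.mulVec v' j = 0 := by
          intro j hj
          have h2 : Q⁻¹.mulVec v = (p:ℤ) • Q⁻¹.mulVec v' := by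
            rw [hvsmul, Matrix.mulVec_smul]
          have h3 := congrFun h2 j
          rw [hTv j hj] at h3
          have := h3.symm
          simp only [Pi.smul_apply, smul_eq_mul] at this
          exact (mul_eq_zero.mp this).resolve_left hpz
        have h5 := ih v' hA' hT' i
        rw [hv'e i, pow_succ']
        exact mul_dvd_mul_left _ h5
    -- conclude u = 0
    funext i
    by_contra h0
    have hN : (u i).natAbs ≠ 0 := Int.natAbs_ne_zero.mpr h0
    have hdvdN : ∀ t : ℕ, p ^ t ∣ (u i).natAbs := by
      intro t
      have h1 := hind t u hu hT i
      have h2 : ((p:ℤ) ^ t).natAbs ∣ (u i).natAbs := Int.natAbs_dvd_natAbs.mpr h1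
      simpa [Int.natAbs_pow] using h2
    set N := (u i).natAbs with hNdef
    have hle : ∀ t, p ^ t ≤ N := fun t => Nat.le_of_dvd (Nat.pos_of_ne_zero hN) (hdvdN t)
    have h2p : 2 ^ N ≤ p ^ N := Nat.pow_le_pow_left hp.two_le N
    exact absurd ((Nat.lt_two_pow_self (n := N)).trans_le (h2p.trans (hle N))) (lt_irrefl N)

/-- if a square integer matrix `A` has an integer eigenvalue `a`
of geometric multiplicity `m` over `ℚ`, then at least `m` of the invariant
factors (diagonal entries of the Smith normal form) of `A` are divisible
by `a`. -/
theorem eigenvalue_multiplicity_le_card_invariant_factors_dvd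
    (n : ℕ) (A : Matrix (Fin n) (Fin n) ℤ) (a : ℤ)
    (d : ℕ → ℤ)
    (P Q : Matrix (Fin n) (Fin n) ℤ)
    (hP : IsUnit P.det) (hQ : IsUnit Q.det)
    (hD : P * A * Q = Matrix.diagonal fun i : Fin n => d (i : ℕ))
    (hdvd : ∀ i : ℕ, i + 1 < n → d i ∣ d (i + 1)) :
    Module.finrank ℚ
        (LinearMap.ker
          ((A.map ((↑) : ℤ → ℚ)) - (a : ℚ) • (1 : Matrix (Fin n) (Fin n) ℚ)).mulVecLin) ≤
      Set.ncard {i : Fin n | a ∣ d (i : ℕ)} := by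
  classical
  -- divisibility chain
  have hchain : ∀ i j : Fin n, (i:ℕ) ≤ (j:ℕ) → d (i:ℕ) ∣ d (j:ℕ) := by
    have H : ∀ jj : ℕ, jj < n → ∀ ii, ii ≤ jj → d ii ∣ d jj := by
      intro jj
      induction jj with
      | zero => intro _ ii hii; simp [Nat.le_zero.mp hii]
      | succ j ih =>
        intro hj ii hii
        rcases Nat.lt_succ_iff_lt_or_eq.mp (Nat.lt_succ_of_le hii) with h | h
        · exact (ih (Nat.lt_of_succ_lt hj) ii (Nat.lt_succ_iff.mp h)).trans (hdvd j hj)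
        · rw [h]
    exact fun i j h => H (j:ℕ) j.isLt (i:ℕ) h
  set Bq : Matrix (Fin n) (Fin n) ℚ :=
    (A.map ((↑) : ℤ → ℚ)) - (a : ℚ) • (1 : Matrix (Fin n) (Fin n) ℚ) with hBq
  -- the comparison map
  let ψ : (Fin n → ℚ) →ₗ[ℚ] ({i : Fin n // a ∣ d (i:ℕ)} → ℚ) :=
    (LinearMap.funLeft ℚ ℚ (Subtype.val)) ∘ₗ (((Q⁻¹).map ((↑) : ℤ → ℚ)).mulVecLin)
  let φ : ↥(LinearMap.ker Bq.mulVecLin) →ₗ[ℚ] ({i : Fin n // a ∣ d (i:ℕ)} → ℚ) :=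
    ψ ∘ₗ (LinearMap.ker Bq.mulVecLin).subtype
  have hinj : Function.Injective φ := by
    rw [injective_iff_map_eq_zero]
    rintro ⟨v, hv⟩ hz
    have hvker : Bq.mulVec v = 0 := hv
    have hAv : (A.map ((↑) : ℤ → ℚ)).mulVec v = (a:ℚ) • v := by
      have := hvker
      rw [hBq, Matrix.sub_mulVec, sub_eq_zero] at this
      rw [this, Matrix.smul_mulVec, Matrix.one_mulVec]
    have hzero : ∀ i : Fin n, a ∣ d (i:ℕ) →
        ((Q⁻¹).map ((↑) : ℤ → ℚ)).mulVec v i = 0 := by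
      intro i hi
      have := congrFun hz ⟨i, hi⟩
      simpa [φ, ψ, LinearMap.funLeft] using this
    -- clear denominators
    obtain ⟨b, hb⟩ := IsLocalization.exist_integer_multiples (nonZeroDivisors ℤ) Finset.univ v
    choose uu huu using fun i => hb i (Finset.mem_univ i)
    have hbz : ((b:ℤ) : ℚ) ≠ 0 := by
      exact_mod_cast nonZeroDivisors.coe_ne_zero b
    have hcast : ∀ i, ((uu i : ℚ)) = ((b:ℤ) : ℚ) * v i := by
      intro i
      have := huu i
      simpa [Algebra.smul_def] using this
    have hcastfun : (fun i => (uu i : ℚ)) = fun i => ((b:ℤ) : ℚ) * v i := funext hcast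
    -- integer eigenvector equation
    have hu : A.mulVec uu = a • uu := by
      funext i
      have hQside : ((A.mulVec uu i : ℤ) : ℚ) = ((a • uu) i : ℚ) := by
        rw [← congrFun (castVec_mulVec A uu) i, hcastfun]
        have h1 : (A.map ((↑) : ℤ → ℚ)).mulVec (fun j => ((b:ℤ) : ℚ) * v j)
            = ((b:ℤ) : ℚ) • ((A.map ((↑) : ℤ → ℚ)).mulVec v) := by
          have : (fun j => ((b:ℤ) : ℚ) * v j) = ((b:ℤ) : ℚ) • v := by
            funext j; simp [Pi.smul_apply, smul_eq_mul]
          rw [this, Matrix.mulVec_smul]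
        rw [h1, hAv]
        simp only [Pi.smul_apply, smul_eq_mul, Int.cast_mul]
        rw [hcast i]
        ring
      exact_mod_cast hQside
    -- vanishing condition
    have hT : ∀ i : Fin n, a ∣ d (i:ℕ) → Q⁻¹.mulVec uu i = 0 := by
      intro i hi
      have hQside : ((Q⁻¹.mulVec uu i : ℤ) : ℚ) = 0 := by
        rw [← congrFun (castVec_mulVec Q⁻¹ uu) i, hcastfun]
        have h1 : ((Q⁻¹).map ((↑) : ℤ → ℚ)).mulVec (fun j => ((b:ℤ) : ℚ) * v j)
            = ((b:ℤ) : ℚ) • (((Q⁻¹).map ((↑) : ℤ → ℚ)).mulVec v) := by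
          have : (fun j => ((b:ℤ) : ℚ) * v j) = ((b:ℤ) : ℚ) • v := by
            funext j; simp [Pi.smul_apply, smul_eq_mul]
          rw [this, Matrix.mulVec_smul]
        rw [h1]
        simp [Pi.smul_apply, hzero i hi]
      exact_mod_cast hQside
    have huu0 : uu = 0 := key_int A a d P Q hQ hD hchain uu hu hT
    have hv0 : v = 0 := by
      funext i
      have := hcast i
      rw [huu0] at this
      simp only [Pi.zero_apply, Int.cast_zero] at this
      have := this.symm
      rcases mul_eq_zero.mp this with h | h
      · exact absurd h hbz
      · exact h
    exact Subtype.ext hv0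
  have hfin := LinearMap.finrank_le_finrank_of_injective hinj
  rw [Module.finrank_pi] at hfin
  have hcard : Fintype.card {i : Fin n // a ∣ d (i:ℕ)} = Set.ncard {i : Fin n | a ∣ d (i:ℕ)} := by
    rw [← Nat.card_coe_set_eq, Nat.card_eq_fintype_card]
    exact Fintype.card_congr' rfl
  rw [hcard] at hfin
  exact hfin
end

section
/- If A is an m×n integer matrix and B an n×k integer matrix, then for each i, the i-th invariant factor s_i(A) divides s_i(AB), and likewise s_i(B) divides s_i(AB), whenever s_i(AB) is defined (i ≤ rank(AB)). -/
/-- `s : ℕ → ℤ` gives the diagonal entries of a Smith normal form of `M`. -/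
def IsSmithDiagonalOf (a b : ℕ) (M : Matrix (Fin a) (Fin b) ℤ) (s : ℕ → ℤ) : Prop :=
  ∃ (P : Matrix (Fin a) (Fin a) ℤ) (Q : Matrix (Fin b) (Fin b) ℤ),
    IsUnit P.det ∧ IsUnit Q.det ∧
    (P * M * Q = Matrix.of fun (i : Fin a) (j : Fin b) =>
      if (i : ℕ) = (j : ℕ) then s (i : ℕ) else 0) ∧
    (∀ i : ℕ, i < M.rank → s i ≠ 0) ∧ (∀ i : ℕ, M.rank ≤ i → s i = 0) ∧
    (∀ i : ℕ, i + 1 < min a b → s i ∣ s (i + 1))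


section SmithAux
open Matrix Finset Equiv

theorem aux_det_expand {s m : ℕ} (V : Matrix (Fin s) (Fin m) ℤ) (W : Matrix (Fin m) (Fin s) ℤ) :
    (V * W).det = ∑ p : Fin s → Fin m, (V.submatrix id p).det * ∏ i, W (p i) i := by
  calc
    (V * W).det = ∑ p : Fin s → Fin m, ∑ σ : Perm (Fin s),
        ((Equiv.Perm.sign σ : ℤˣ) : ℤ) * ∏ i, V (σ i) (p i) * W (p i) i := by
      simp only [det_apply', mul_apply, prod_univ_sum, mul_sum, Fintype.piFinset_univ]
      rw [Finset.sum_comm]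
      norm_cast
    _ = _ := by
      refine Finset.sum_congr rfl fun p _ => ?_
      rw [det_apply', Finset.sum_mul]
      refine Finset.sum_congr rfl fun σ _ => ?_
      simp only [prod_mul_distrib, submatrix_apply, id_eq]
      push_cast
      ring

theorem aux_dvd_det_mul {s m : ℕ} (V : Matrix (Fin s) (Fin m) ℤ) (W : Matrix (Fin m) (Fin s) ℤ)
    (g : ℤ) (h : ∀ p : Fin s → Fin m, g ∣ (W.submatrix p id).det) : g ∣ (V * W).det := by
  rw [← Matrix.det_transpose, Matrix.transpose_mul, aux_det_expand]
  refine Finset.dvd_sum fun p _ => ?_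
  have : (W.transpose.submatrix id p) = (W.submatrix p id).transpose := by
    ext i j; simp
  exact dvd_mul_of_dvd_left (by rw [this, Matrix.det_transpose]; exact h p) _

theorem aux_dvd_det_mul' {s m k l : ℕ} (V : Matrix (Fin l) (Fin m) ℤ)
    (W : Matrix (Fin m) (Fin k) ℤ) (g : ℤ) (e : Fin s → Fin l) (f : Fin s → Fin k)
    (h : ∀ p : Fin s → Fin m, g ∣ (W.submatrix p f).det) :
    g ∣ ((V * W).submatrix e f).det := by
  have : (V * W).submatrix e f = (V.submatrix e id) * (W.submatrix id f) := by
    ext i j; simp [Matrix.mul_apply]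
  rw [this]
  exact aux_dvd_det_mul _ _ _ fun p => by
    simpa using h p

theorem aux_chain {c : ℕ → ℤ} {bd : ℕ} (hc : ∀ j, j + 1 < bd → c j ∣ c (j + 1))
    {p q : ℕ} (hpq : p ≤ q) (hq : q < bd) : c p ∣ c q := by
  induction q with
  | zero => simpa [Nat.le_zero.mp hpq] using dvd_refl (c 0)
  | succ q ih =>
    rcases Nat.lt_or_ge p (q+1) with h | h
    · exact dvd_trans (ih (Nat.lt_succ_iff.mp h) (Nat.lt_of_succ_lt hq)) (hc q hq)
    · have : p = q + 1 := le_antisymm hpq h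
      simp [this]

theorem aux_diag_minor {m k : ℕ} (c : ℕ → ℤ) {s : ℕ} (t : Fin s → Fin m) (u : Fin s → Fin k)
    (chain : ∀ j, j + 1 < min m k → c j ∣ c (j + 1))
    (hu : ∀ l : Fin s, (l : ℕ) ≤ (u l : ℕ)) (hub : ∀ l : Fin s, (u l : ℕ) < min m k) :
    (∏ l : Fin s, c (l : ℕ)) ∣
      ((Matrix.of fun (i : Fin m) (j : Fin k) =>
        if (i : ℕ) = (j : ℕ) then c (i : ℕ) else 0).submatrix t u).det := by
  rw [Matrix.det_apply']
  refine Finset.dvd_sum fun σ _ => ?_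
  refine Dvd.dvd.mul_left ?_ _
  by_cases hmatch : ∀ l : Fin s, ((t (σ l) : ℕ)) = ((u l : ℕ))
  · have : ∀ l : Fin s,
        ((Matrix.of fun (i : Fin m) (j : Fin k) =>
          if (i : ℕ) = (j : ℕ) then c (i : ℕ) else 0).submatrix t u) (σ l) l = c ((u l : ℕ)) := by
      intro l
      simp [Matrix.submatrix_apply, hmatch l]
    rw [Finset.prod_congr rfl fun l _ => this l]
    exact Finset.prod_dvd_prod_of_dvd _ _ fun l _ =>
      aux_chain chain (hu l) (hub l)
  · push_neg at hmatch
    obtain ⟨l, hl⟩ := hmatch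
    refine Dvd.dvd.trans (dvd_zero _) (dvd_of_eq ?_)
    symm
    exact Finset.prod_eq_zero (Finset.mem_univ l) (by simp [Matrix.submatrix_apply, hl])

theorem aux_main {m n k : ℕ} (A : Matrix (Fin m) (Fin n) ℤ) (B : Matrix (Fin n) (Fin k) ℤ)
    (sA sAB : ℕ → ℤ)
    (P : Matrix (Fin m) (Fin m) ℤ) (Q : Matrix (Fin n) (Fin n) ℤ)
    (hP : IsUnit P.det) (hQ : IsUnit Q.det)
    (hPQ : P * A * Q = Matrix.of fun (i : Fin m) (j : Fin n) =>
      if (i : ℕ) = (j : ℕ) then sA (i : ℕ) else 0)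
    (P' : Matrix (Fin m) (Fin m) ℤ) (Q' : Matrix (Fin k) (Fin k) ℤ)
    (hP' : IsUnit P'.det) (hQ' : IsUnit Q'.det)
    (hPQ' : P' * (A * B) * Q' = Matrix.of fun (i : Fin m) (j : Fin k) =>
      if (i : ℕ) = (j : ℕ) then sAB (i : ℕ) else 0)
    (chainA : ∀ j, j + 1 < min m n → sA j ∣ sA (j + 1))
    (chainM : ∀ j, j + 1 < min m k → sAB j ∣ sAB (j + 1))
    (i : ℕ) (him : i + 1 ≤ m) (hik : i + 1 ≤ k)
    (hnz : ∀ j, j < i → sAB j ≠ 0) : sA i ∣ sAB i := by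
  set DA : Matrix (Fin m) (Fin n) ℤ := Matrix.of fun (i : Fin m) (j : Fin n) =>
      if (i : ℕ) = (j : ℕ) then sA (i : ℕ) else 0 with hDA
  set DM : Matrix (Fin m) (Fin k) ℤ := Matrix.of fun (i : Fin m) (j : Fin k) =>
      if (i : ℕ) = (j : ℕ) then sAB (i : ℕ) else 0 with hDM
  have hA' : A = P⁻¹ * DA * Q⁻¹ := by
    rw [← hPQ]
    simp only [Matrix.mul_assoc]
    rw [Matrix.nonsing_inv_mul_cancel_left _ _ hP, Matrix.mul_nonsing_inv _ hQ, Matrix.mul_one]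
  set M' : Matrix (Fin m) (Fin k) ℤ := DA * (Q⁻¹ * (B * Q')) with hM'
  have key : DM = (P' * P⁻¹) * M' := by
    rw [← hPQ', hA', hM']
    simp only [Matrix.mul_assoc]
  have key2 : M' = (P * P'⁻¹) * DM := by
    rw [key]
    simp only [Matrix.mul_assoc]
    rw [Matrix.nonsing_inv_mul_cancel_left _ _ hP', Matrix.mul_nonsing_inv_cancel_left _ _ hP]
  have hE : ∀ t : Fin (i + 1) → Fin m,
      sA i * (∏ l : Fin i, sAB (l : ℕ)) ∣ (M'.submatrix t (Fin.castLE hik)).det := by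
    intro t
    by_cases hinj : Function.Injective t
    · -- find a row index with large t value
      have hex : ∃ j₀ : Fin (i + 1), i ≤ (t j₀ : ℕ) := by
        by_contra hcon
        push_neg at hcon
        have : Function.Injective (fun j : Fin (i + 1) => (⟨(t j : ℕ), hcon j⟩ : Fin i)) := by
          intro a b hab
          apply hinj
          apply Fin.val_injective
          simpa using hab
        have := Fintype.card_le_of_injective _ this
        simp at this
      obtain ⟨j₀, hj₀⟩ := hex
      rw [Matrix.det_succ_row _ j₀]
      refine Finset.dvd_sum fun l _ => ?_
      have hentry : sA i ∣ (M'.submatrix t (Fin.castLE hik)) j₀ l := by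
        rw [Matrix.submatrix_apply, hM', Matrix.mul_apply]
        refine Finset.dvd_sum fun w _ => ?_
        rcases eq_or_ne ((t j₀ : ℕ)) ((w : ℕ)) with h | h
        · have hb : (t j₀ : ℕ) < min m n := lt_min (t j₀).2 (h ▸ w.2)
          rw [hDA]
          rw [Matrix.of_apply, if_pos h]
          exact dvd_mul_of_dvd_left (aux_chain chainA hj₀ hb) _
        · rw [hDA]
          simp [h]
      have hminor : (∏ l : Fin i, sAB (l : ℕ)) ∣
          (((M'.submatrix t (Fin.castLE hik)).submatrix j₀.succAbove l.succAbove)).det := by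
        rw [Matrix.submatrix_submatrix, key2]
        refine aux_dvd_det_mul' _ _ _ _ _ fun p => ?_
        refine aux_diag_minor sAB p _ chainM (fun w => ?_) (fun w => ?_)
        · show (w : ℕ) ≤ ((Fin.castLE hik (l.succAbove w) : Fin k) : ℕ)
          simp only [Fin.coe_castLE]
          unfold Fin.succAbove
          split_ifs <;> simp <;> omega
        · show ((Fin.castLE hik (l.succAbove w) : Fin k) : ℕ) < min m k
          simp only [Fin.coe_castLE]
          have : ((l.succAbove w : Fin (i+1)) : ℕ) < i + 1 := (l.succAbove w).2
          exact lt_min (by omega) (by omega)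
      calc sA i * (∏ l : Fin i, sAB (l : ℕ)) ∣
          ((-1) ^ ((j₀ : ℕ) + (l : ℕ)) * (M'.submatrix t (Fin.castLE hik)) j₀ l) *
            (((M'.submatrix t (Fin.castLE hik)).submatrix j₀.succAbove l.succAbove)).det :=
            mul_dvd_mul (Dvd.dvd.mul_left hentry _) hminor
        _ = _ := by ring
    · obtain ⟨a, b, hab, hne⟩ : ∃ a b, t a = t b ∧ a ≠ b := by
        rw [Function.Injective] at hinj
        push_neg at hinj
        obtain ⟨a, b, h1, h2⟩ := hinj
        exact ⟨a, b, h1, h2⟩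
      have : (M'.submatrix t (Fin.castLE hik)) a = (M'.submatrix t (Fin.castLE hik)) b := by
        funext j; simp [Matrix.submatrix_apply, hab]
      rw [Matrix.det_zero_of_row_eq hne this]
      exact dvd_zero _
  have hNdet : ((DM).submatrix (Fin.castLE him) (Fin.castLE hik)).det =
      (∏ l : Fin i, sAB (l : ℕ)) * sAB i := by
    have hdiag : (DM).submatrix (Fin.castLE him) (Fin.castLE hik) =
        Matrix.diagonal (fun j : Fin (i + 1) => sAB (j : ℕ)) := by
      ext a b
      rw [hDM]
      simp only [Matrix.submatrix_apply, Matrix.of_apply, Fin.coe_castLE,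
        Matrix.diagonal_apply]
      by_cases h : (a : ℕ) = (b : ℕ)
      · rw [if_pos h, if_pos (Fin.val_injective h)]
      · rw [if_neg h, if_neg (fun hh => h (congrArg Fin.val hh))]
    rw [hdiag, Matrix.det_diagonal, Fin.prod_univ_castSucc]
    simp
  have hdvdN : sA i * (∏ l : Fin i, sAB (l : ℕ)) ∣
      ((DM).submatrix (Fin.castLE him) (Fin.castLE hik)).det := by
    rw [key]
    exact aux_dvd_det_mul' _ _ _ _ _ fun p => hE p
  rw [hNdet] at hdvdN
  have hPi : (∏ l : Fin i, sAB (l : ℕ)) ≠ 0 := by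
    rw [Finset.prod_ne_zero_iff]
    exact fun l _ => hnz _ l.2
  rw [mul_comm (sA i)] at hdvdN
  exact (mul_dvd_mul_iff_left hPi).mp hdvdN

/-- transpose a smith-like diagonal relation -/
theorem aux_transpose {a b : ℕ} (M : Matrix (Fin a) (Fin b) ℤ) (s : ℕ → ℤ)
    (P : Matrix (Fin a) (Fin a) ℤ) (Q : Matrix (Fin b) (Fin b) ℤ)
    (hPQ : P * M * Q = Matrix.of fun (i : Fin a) (j : Fin b) =>
      if (i : ℕ) = (j : ℕ) then s (i : ℕ) else 0) :
    Q.transpose * M.transpose * P.transpose = Matrix.of fun (i : Fin b) (j : Fin a) =>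
      if (i : ℕ) = (j : ℕ) then s (i : ℕ) else 0 := by
  have := congrArg Matrix.transpose hPQ
  rw [Matrix.transpose_mul, Matrix.transpose_mul] at this
  rw [← Matrix.mul_assoc] at this
  rw [this]
  ext x y
  simp only [Matrix.transpose_apply, Matrix.of_apply]
  by_cases h : (x : ℕ) = (y : ℕ)
  · rw [if_pos h.symm, if_pos h, h]
  · rw [if_neg (fun hh => h hh.symm), if_neg h]


end SmithAux

/-- for integer matrices `A` (m×n) and `B` (n×k), the `i`-th
invariant factor of `A` divides the `i`-th invariant factor of `AB`, and
likewise for `B`, whenever `i ≤ rank (AB)`. -/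
theorem invariant_factor_dvd_invariant_factor_mul
    (m n k : ℕ) (A : Matrix (Fin m) (Fin n) ℤ) (B : Matrix (Fin n) (Fin k) ℤ)
    (sA sB sAB : ℕ → ℤ)
    (hA : IsSmithDiagonalOf m n A sA)
    (hB : IsSmithDiagonalOf n k B sB)
    (hAB : IsSmithDiagonalOf m k (A * B) sAB) :
    ∀ i : ℕ, i < (A * B).rank → sA i ∣ sAB i ∧ sB i ∣ sAB i := by
  intro i hi
  obtain ⟨P, Q, hP, hQ, hPQ, _, _, chainA⟩ := hA
  obtain ⟨PB, QB, hPB, hQB, hPQB, _, _, chainB⟩ := hB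
  obtain ⟨P', Q', hP', hQ', hPQ', hnz, _, chainM⟩ := hAB
  have hrm : (A * B).rank ≤ m := le_trans ((A * B).rank_le_card_height) (by simp)
  have hrk : (A * B).rank ≤ k := le_trans ((A * B).rank_le_card_width) (by simp)
  have him : i + 1 ≤ m := Nat.succ_le_of_lt (lt_of_lt_of_le hi hrm)
  have hik : i + 1 ≤ k := Nat.succ_le_of_lt (lt_of_lt_of_le hi hrk)
  have hnz' : ∀ j, j < i → sAB j ≠ 0 := fun j hj => hnz j (lt_trans hj hi)
  constructor
  · exact aux_main A B sA sAB P Q hP hQ hPQ P' Q' hP' hQ' hPQ' chainA chainM i him hik hnz'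
  · have hPQ'T := aux_transpose (A * B) sAB P' Q' hPQ'
    rw [Matrix.transpose_mul A B] at hPQ'T
    have hPQBT := aux_transpose B sB PB QB hPQB
    refine aux_main B.transpose A.transpose sB sAB QB.transpose PB.transpose
      (by simpa using hQB) (by simpa using hPB) hPQBT
      Q'.transpose P'.transpose (by simpa using hQ') (by simpa using hP')
      hPQ'T (fun j hj => chainB j (by omega)) (fun j hj => chainM j (by omega))
      i hik him hnz'
end

section
/- Let R be a discrete valuation ring with uniformizer π and residue field k, and let η: M → N be a homomorphism of finite-rank free R-modules. Define M_i = {m ∈ M : η(m) ∈ π^i N} and let \bar{M_i} be the image of M_i in M/πM. Then the multiplicity of π^i as an elementary divisor of η equals dim_k(\bar{M_i}/\bar{M_{i+1}}). -/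
/-- `M_l = {m ∈ R^m : η(m) ∈ π^l N}`, where `η` is row-vector multiplication by
the matrix `A`. -/
def MSub {R : Type*} [CommRing R] (π : R) (m n : ℕ)
    (A : Matrix (Fin m) (Fin n) R) (l : ℕ) : Submodule R (Fin m → R) :=
  Submodule.comap A.vecMulLinear
    (Ideal.span {π ^ l} • (⊤ : Submodule R (Fin n → R)))

/-- `\bar{M_l}`: the image of `M_l` in `M/πM`, realized inside `(R/π)^m`. -/
def MBar {R : Type*} [CommRing R] (π : R) (m n : ℕ)
    (A : Matrix (Fin m) (Fin n) R) (l : ℕ) :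
    Submodule (R ⧸ Ideal.span {π}) (Fin m → R ⧸ Ideal.span {π}) :=
  Submodule.span (R ⧸ Ideal.span {π})
    ((fun (x : Fin m → R) (j : Fin m) => Ideal.Quotient.mk (Ideal.span {π}) (x j)) ''
      (MSub π m n A l : Set (Fin m → R)))

open Matrix

section Aux

variable {R : Type*} [CommRing R]

lemma mem_span_smul_top_iff (a : R) {n : ℕ} (y : Fin n → R) :
    y ∈ Ideal.span {a} • (⊤ : Submodule R (Fin n → R)) ↔ ∀ j, a ∣ y j := by
  constructor
  · intro h
    refine Submodule.smul_induction_on h ?_ ?_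
    · intro r hr z _ j
      rcases Ideal.mem_span_singleton.mp hr with ⟨c, rfl⟩
      exact ⟨c * z j, by simp [Pi.smul_apply, smul_eq_mul]; ring⟩
    · intro x y hx hy j; exact dvd_add (hx j) (hy j)
  · intro h
    choose z hz using h
    have : y = a • z := funext fun j => by rw [hz j]; rfl
    rw [this]
    exact Submodule.smul_mem_smul (Ideal.mem_span_singleton_self a) trivial

lemma mem_MSub_iff {π : R} {m n : ℕ} {A : Matrix (Fin m) (Fin n) R} {l : ℕ}
    {x : Fin m → R} : x ∈ MSub π m n A l ↔ ∀ j, π ^ l ∣ (x ᵥ* A) j := by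
  rw [MSub, Submodule.mem_comap, Matrix.vecMulLinear_apply, mem_span_smul_top_iff]

lemma dvd_vecMul_of {a : R} {m n : ℕ} {y : Fin m → R} (h : ∀ i, a ∣ y i)
    (Q : Matrix (Fin m) (Fin n) R) (j : Fin n) : a ∣ (y ᵥ* Q) j := by
  simp only [Matrix.vecMul, dotProduct]
  exact Finset.dvd_sum fun i _ => (h i).mul_right _

lemma dvd_vecMul_iff {a : R} {n : ℕ} {Q : Matrix (Fin n) (Fin n) R} (hQ : IsUnit Q.det)
    (y : Fin n → R) : (∀ j, a ∣ (y ᵥ* Q) j) ↔ ∀ j, a ∣ y j := by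
  constructor
  · intro h j
    have hy : y = (y ᵥ* Q) ᵥ* Q⁻¹ := by
      rw [vecMul_vecMul, Matrix.mul_nonsing_inv _ hQ, vecMul_one]
    rw [hy]
    exact dvd_vecMul_of h _ j
  · intro h j
    exact dvd_vecMul_of h _ j

lemma MSub_map {π : R} {m n : ℕ} {A D : Matrix (Fin m) (Fin n) R}
    {P : Matrix (Fin m) (Fin m) R} {Q : Matrix (Fin n) (Fin n) R}
    (hP : IsUnit P.det) (hQ : IsUnit Q.det) (hPAQ : D = P * A * Q) (l : ℕ) :
    (MSub π m n D l).map P.vecMulLinear = MSub π m n A l := by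
  ext y
  simp only [Submodule.mem_map, Matrix.vecMulLinear_apply]
  constructor
  · rintro ⟨x, hx, rfl⟩
    rw [mem_MSub_iff] at hx ⊢
    rw [hPAQ] at hx
    have h2 : ∀ j, π ^ l ∣ ((x ᵥ* P ᵥ* A) ᵥ* Q) j := by
      intro j
      have := hx j
      rwa [← vecMul_vecMul, ← vecMul_vecMul] at this
    exact (dvd_vecMul_iff hQ _).mp h2
  · intro hy
    refine ⟨y ᵥ* P⁻¹, ?_, ?_⟩
    · rw [mem_MSub_iff] at hy ⊢
      intro j
      rw [hPAQ]
      have h1 : y ᵥ* P⁻¹ ᵥ* (P * A * Q) = (y ᵥ* A) ᵥ* Q := by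
        rw [vecMul_vecMul, ← Matrix.mul_assoc, ← Matrix.mul_assoc,
          Matrix.nonsing_inv_mul _ hP, Matrix.one_mul, ← vecMul_vecMul]
      rw [h1]
      exact dvd_vecMul_of hy _ j
    · rw [vecMul_vecMul, Matrix.nonsing_inv_mul _ hP, vecMul_one]

/-- `vecMul` by an invertible square matrix, as a linear equivalence. -/
noncomputable def vecMulEquiv {K : Type*} [CommRing K] {m : ℕ}
    (P : Matrix (Fin m) (Fin m) K) (h : IsUnit P.det) : (Fin m → K) ≃ₗ[K] (Fin m → K) :=
  LinearEquiv.ofLinear P.vecMulLinear P⁻¹.vecMulLinear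
    (LinearMap.ext fun x => by
      simp [Matrix.vecMulLinear_apply, vecMul_vecMul, Matrix.nonsing_inv_mul _ h,
        vecMul_one])
    (LinearMap.ext fun x => by
      simp [Matrix.vecMulLinear_apply, vecMul_vecMul, Matrix.mul_nonsing_inv _ h,
        vecMul_one])

lemma MBar_map {π : R} {m n : ℕ} {A D : Matrix (Fin m) (Fin n) R}
    {P : Matrix (Fin m) (Fin m) R} {Q : Matrix (Fin n) (Fin n) R}
    (hP : IsUnit P.det) (hQ : IsUnit Q.det) (hPAQ : D = P * A * Q) (l : ℕ) :
    MBar π m n A l =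
      (MBar π m n D l).map (P.map (Ideal.Quotient.mk (Ideal.span {π}))).vecMulLinear := by
  set mk := Ideal.Quotient.mk (Ideal.span {π})
  rw [MBar, MBar, ← MSub_map hP hQ hPAQ l, Submodule.map_coe, Submodule.map_span,
    Set.image_image, Set.image_image]
  refine congrArg _ (Set.image_congr fun x _ => funext fun j => ?_)
  simp only [Matrix.vecMulLinear_apply]
  exact (RingHom.map_vecMul mk P x j)

lemma vecMul_diag {m n : ℕ} {D : Matrix (Fin m) (Fin n) R}
    (hdiag : ∀ (i : Fin m) (j : Fin n), (i : ℕ) ≠ (j : ℕ) → D i j = 0)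
    (x : Fin m → R) (c : Fin n) :
    (x ᵥ* D) c = if h : (c : ℕ) < m then x ⟨c, h⟩ * D ⟨c, h⟩ c else 0 := by
  simp only [Matrix.vecMul, dotProduct]
  by_cases h : (c : ℕ) < m
  · rw [dif_pos h]
    exact Finset.sum_eq_single_of_mem (⟨(c : ℕ), h⟩ : Fin m) (Finset.mem_univ _)
      (fun b _ hb => by rw [hdiag b c (fun hbc => hb (Fin.ext hbc)), mul_zero])
  · rw [dif_neg h]
    apply Finset.sum_eq_zero
    intro b _
    rw [hdiag b c (fun hbc => h (hbc ▸ b.isLt)), mul_zero]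

variable [IsDomain R] [IsDiscreteValuationRing R]

lemma dvd_of_pow_dvd_mul {π : R} (hπ : Irreducible π) {l : ℕ} {x d : R}
    (h : π ^ l ∣ x * d) (hd : ¬ π ^ l ∣ d) : π ∣ x := by
  by_contra hx
  exact hd (hπ.prime.pow_dvd_of_dvd_mul_left l hx h)

lemma associated_pow_iff {π : R} (hπ : Irreducible π) (d : R) (i : ℕ) :
    Associated d (π ^ i) ↔ π ^ i ∣ d ∧ ¬ π ^ (i + 1) ∣ d := by
  constructor
  · intro h
    refine ⟨h.symm.dvd, fun hc => ?_⟩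
    have h2 : π ^ i * π ∣ π ^ i * 1 := by
      rw [mul_one, ← pow_succ]
      exact hc.trans h.dvd
    have := (mul_dvd_mul_iff_left (pow_ne_zero i hπ.ne_zero)).mp h2
    exact hπ.not_isUnit (isUnit_of_dvd_one this)
  · rintro ⟨⟨c, rfl⟩, hnd⟩
    have hc : ¬ π ∣ c := by
      rintro ⟨e, rfl⟩
      exact hnd ⟨e, by ring⟩
    have hcu : IsUnit c := by
      by_contra hcu
      apply hc
      rw [← Ideal.mem_span_singleton,
        ← (IsDiscreteValuationRing.irreducible_iff_uniformizer π).mp hπ]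
      exact hcu
    exact (associated_mul_unit_left _ _ hcu)

lemma finrank_MBar_diag {π : R} {m n : ℕ} {D : Matrix (Fin m) (Fin n) R} (hπ : Irreducible π)
    (hdiag : ∀ (i : Fin m) (j : Fin n), (i : ℕ) ≠ (j : ℕ) → D i j = 0) (l : ℕ) :
    Module.finrank (R ⧸ Ideal.span {π}) (MBar π m n D l) +
      Nat.card {j : Fin m | ∃ hj : (j : ℕ) < n, ¬ π ^ l ∣ D j ⟨(j : ℕ), hj⟩} = m := by
  classical
  haveI : (Ideal.span {π}).IsMaximal := PrincipalIdealRing.isMaximal_of_irreducible hπ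
  haveI : Nontrivial (R ⧸ Ideal.span {π}) :=
    Ideal.Quotient.nontrivial_iff.mpr (Ideal.IsMaximal.ne_top ‹_›)
  set k := R ⧸ Ideal.span {π} with hk
  set mk : R →+* k := Ideal.Quotient.mk (Ideal.span {π}) with hmk
  set T : Set (Fin m) := {j | ∃ hj : (j : ℕ) < n, ¬ π ^ l ∣ D j ⟨(j : ℕ), hj⟩} with hT
  have hforced : ∀ (x : Fin m → R), x ∈ MSub π m n D l → ∀ j ∈ T, mk (x j) = 0 := by
    intro x hx j hj
    obtain ⟨hlt, hnd⟩ := hj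
    have hx' := mem_MSub_iff.mp hx ⟨(j : ℕ), hlt⟩
    rw [vecMul_diag hdiag] at hx'
    rw [dif_pos (show ((⟨(j : ℕ), hlt⟩ : Fin n) : ℕ) < m from j.isLt)] at hx'
    have hπx : π ∣ x j := dvd_of_pow_dvd_mul hπ hx' hnd
    rw [hmk, Ideal.Quotient.eq_zero_iff_mem, Ideal.mem_span_singleton]
    exact hπx
  let ψ : ((↥Tᶜ) → k) →ₗ[k] (Fin m → k) :=
    { toFun := fun y j => if h : j ∈ T then 0 else y ⟨j, h⟩
      map_add' := fun y z => by
        funext j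
        by_cases h : j ∈ T <;> simp [h]
      map_smul' := fun c y => by
        funext j
        by_cases h : j ∈ T <;> simp [h] }
  have hψinj : Function.Injective ψ := by
    intro y z hyz
    funext jc
    have := congrFun hyz jc.1
    simpa [ψ, dif_neg jc.2] using this
  have hrange : MBar π m n D l = LinearMap.range ψ := by
    apply le_antisymm
    · rw [MBar]
      apply Submodule.span_le.mpr
      rintro _ ⟨x, hx, rfl⟩
      refine ⟨fun jc => mk (x jc.1), ?_⟩
      funext j
      by_cases h : j ∈ T
      · simp only [ψ, LinearMap.coe_mk, AddHom.coe_mk, dif_pos h]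
        exact (hforced x hx j h).symm
      · simp [ψ, dif_neg h, hmk]
    · rintro _ ⟨y, rfl⟩
      have hsurj := Ideal.Quotient.mk_surjective (I := Ideal.span {π})
      choose lift hlift using hsurj
      set x : Fin m → R := fun j => if h : j ∈ T then 0 else lift (y ⟨j, h⟩) with hxdef
      have hmem : x ∈ MSub π m n D l := by
        rw [mem_MSub_iff]
        intro c
        rw [vecMul_diag hdiag]
        by_cases h : (c : ℕ) < m
        · rw [dif_pos h]
          by_cases hTc : (⟨(c : ℕ), h⟩ : Fin m) ∈ T
          · have : x ⟨(c : ℕ), h⟩ = 0 := by simp [hxdef, dif_pos hTc]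
            rw [this, zero_mul]
            exact dvd_zero _
          · have hdvd : π ^ l ∣ D ⟨(c : ℕ), h⟩ c := by
              by_contra hnd
              exact hTc ⟨c.isLt, hnd⟩
            exact hdvd.mul_left _
        · rw [dif_neg h]
          exact dvd_zero _
      refine Submodule.subset_span ⟨x, hmem, ?_⟩
      funext j
      by_cases h : j ∈ T
      · simp [ψ, hxdef, dif_pos h]
      · simp [ψ, hxdef, dif_neg h, hlift]
  rw [hrange]
  have heq : Module.finrank k ↥(LinearMap.range ψ) = Module.finrank k ((↥Tᶜ) → k) :=
    ((LinearEquiv.ofInjective ψ hψinj).symm).finrank_eq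
  rw [heq, Module.finrank_fintype_fun_eq_card, Fintype.card_compl_set,
    Fintype.card_fin, Nat.card_eq_fintype_card]
  have hle : Fintype.card ↥T ≤ m := by
    simpa using Fintype.card_subtype_le (· ∈ T)
  omega

end Aux

/-- over a DVR `R` of characteristic zero with uniformizer `π` and
residue field `k = R/(π)`, for a homomorphism `η : R^m → R^n` of free modules
(given by a matrix `A`, with Smith normal form data `D = P A Q` diagonal), the
multiplicity of `π^i` as an elementary divisor of `η` equals
`dim_k (\bar{M_i} / \bar{M_{i+1}})`. -/
theorem elementary_divisor_multiplicity_eq_dim_MBar_quotient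
    {R : Type*} [CommRing R] [IsDomain R] [IsDiscreteValuationRing R] [CharZero R]
    (π : R) (hπ : Irreducible π) (m n : ℕ)
    (A D : Matrix (Fin m) (Fin n) R)
    (P : Matrix (Fin m) (Fin m) R) (Q : Matrix (Fin n) (Fin n) R)
    (hP : IsUnit P.det) (hQ : IsUnit Q.det) (hPAQ : D = P * A * Q)
    (hdiag : ∀ (i : Fin m) (j : Fin n), (i : ℕ) ≠ (j : ℕ) → D i j = 0)
    (i : ℕ) :
    Set.ncard {p : Fin m × Fin n |
        (p.1 : ℕ) = (p.2 : ℕ) ∧ Associated (D p.1 p.2) (π ^ i)} =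
      Module.finrank (R ⧸ Ideal.span {π}) (MBar π m n A i) -
        Module.finrank (R ⧸ Ideal.span {π}) (MBar π m n A (i + 1)) := by
  classical
  set k := R ⧸ Ideal.span {π} with hk
  -- change of basis: MBar A has same finrank as MBar D
  have hPk : IsUnit ((P.map (Ideal.Quotient.mk (Ideal.span {π}))).det) := by
    have hdet := RingHom.map_det (Ideal.Quotient.mk (Ideal.span {π})) P
    rw [show (P.map (Ideal.Quotient.mk (Ideal.span {π})) : Matrix (Fin m) (Fin m) k) =
      (Ideal.Quotient.mk (Ideal.span {π})).mapMatrix P from rfl, ← hdet]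
    exact hP.map _
  have hA : ∀ l, Module.finrank k (MBar π m n A l) = Module.finrank k (MBar π m n D l) := by
    intro l
    rw [MBar_map hP hQ hPAQ l]
    exact LinearEquiv.finrank_map_eq (vecMulEquiv _ hPk) _
  set T : ℕ → Set (Fin m) :=
    fun l => {j : Fin m | ∃ hj : (j : ℕ) < n, ¬ π ^ l ∣ D j ⟨(j : ℕ), hj⟩} with hTdef
  have hdim : ∀ l, Module.finrank k (MBar π m n D l) + Nat.card (T l) = m :=
    fun l => finrank_MBar_diag hπ hdiag l
  have hsub : T i ⊆ T (i + 1) := by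
    rintro j ⟨hj, hnd⟩
    exact ⟨hj, fun hc => hnd ((pow_dvd_pow π (Nat.le_succ i)).trans hc)⟩
  -- identify the set of associated diagonal entries with T (i+1) \ T i
  set S : Set (Fin m × Fin n) :=
    {p : Fin m × Fin n | (p.1 : ℕ) = (p.2 : ℕ) ∧ Associated (D p.1 p.2) (π ^ i)} with hS
  have himg : Prod.fst '' S = T (i + 1) \ T i := by
    ext j
    constructor
    · rintro ⟨⟨j1, j2⟩, ⟨heq, hass⟩, rfl⟩
      obtain ⟨hdvd, hnd⟩ := (associated_pow_iff hπ _ i).mp hass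
      have hlt : ((j1 : Fin m) : ℕ) < n := heq ▸ j2.isLt
      have hD : D j1 ⟨(j1 : ℕ), hlt⟩ = D j1 j2 := congrArg _ (Fin.ext heq)
      constructor
      · exact ⟨hlt, by rw [hD]; exact hnd⟩
      · rintro ⟨hlt', hnd'⟩
        have hD' : D j1 ⟨(j1 : ℕ), hlt'⟩ = D j1 j2 := congrArg _ (Fin.ext heq)
        rw [hD'] at hnd'
        exact hnd' hdvd
    · rintro ⟨⟨hlt, hnd⟩, hnotin⟩
      refine ⟨(j, ⟨(j : ℕ), hlt⟩), ⟨rfl, ?_⟩, rfl⟩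
      rw [associated_pow_iff hπ _ i]
      refine ⟨?_, hnd⟩
      by_contra hc
      exact hnotin ⟨hlt, hc⟩
  have hinj : Set.InjOn Prod.fst S := by
    rintro ⟨p1, p2⟩ hp ⟨q1, q2⟩ hq h1
    obtain ⟨hpe, -⟩ := hp
    obtain ⟨hqe, -⟩ := hq
    simp only at h1 hpe hqe
    subst h1
    have h2 : p2 = q2 := Fin.ext (by omega)
    rw [h2]
  have hcount : S.ncard = Nat.card (T (i + 1)) - Nat.card (T i) := by
    rw [← Set.ncard_image_of_injOn hinj, himg, Set.ncard_diff hsub (Set.toFinite _),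
      Nat.card_coe_set_eq, Nat.card_coe_set_eq]
  have hmono : Nat.card (T i) ≤ Nat.card (T (i + 1)) := by
    rw [Nat.card_coe_set_eq, Nat.card_coe_set_eq]
    exact Set.ncard_le_ncard hsub (Set.toFinite _)
  have h1 := hdim i
  have h2 := hdim (i + 1)
  rw [hA i, hA (i + 1), hcount]
  omega
end

section
/- Let S be a set of size mn partitioned into m parts of size n, let X be the set of transversals (subsets containing exactly one element from each part), and let A be the |X|×|X| incidence matrix where two transversals are incident iff they are disjoint. Then the eigenvalues of A are (-1)^{m-r}(n-1)^r for 0 ≤ r ≤ m, with multiplicity binom(m,r)(n-1)^{m-r}. -/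
open Polynomial

namespace TransversalAux

open Matrix Finset

variable {n m : ℕ} [NeZero n]

/-- m-fold tensor power of a matrix indexed by `ZMod n`. -/
def T (m : ℕ) (M : Matrix (ZMod n) (ZMod n) ℚ) :
    Matrix (Fin m → ZMod n) (Fin m → ZMod n) ℚ :=
  Matrix.of fun x y => ∏ i, M (x i) (y i)

lemma T_mul (M N : Matrix (ZMod n) (ZMod n) ℚ) :
    T m (M * N) = T m M * T m N := by
  ext x y
  simp only [T, Matrix.mul_apply, Matrix.of_apply]
  rw [Finset.prod_univ_sum]
  rw [Fintype.piFinset_univ]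
  refine Finset.sum_congr rfl fun z _ => ?_
  rw [← Finset.prod_mul_distrib]

omit [NeZero n] in
lemma T_one : T (n := n) m 1 = 1 := by
  ext x y
  simp only [T, Matrix.of_apply, Matrix.one_apply]
  rw [Fintype.prod_boole]
  simp [funext_iff]

lemma charpoly_conj {α : Type*} [Fintype α] [DecidableEq α]
    (P Q D : Matrix α α ℚ) (hPQ : P * Q = 1) (hQP : Q * P = 1) :
    (P * D * Q).charpoly = D.charpoly := by
  have hmap : ∀ M : Matrix α α ℚ, charmatrix M = Matrix.scalar α (X : ℚ[X]) - M.map C := by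
    intro M; rfl
  have h1 : (P.map (C : ℚ →+* ℚ[X])) * (Q.map C) = 1 := by
    rw [← Matrix.map_mul, hPQ, Matrix.map_one _ (map_zero C) (map_one C)]
  have h2 : (Q.map (C : ℚ →+* ℚ[X])) * (P.map C) = 1 := by
    rw [← Matrix.map_mul, hQP, Matrix.map_one _ (map_zero C) (map_one C)]
  have key : charmatrix (P * D * Q) =
      (P.map C) * charmatrix D * (Q.map C) := by
    rw [hmap, hmap]
    rw [Matrix.mul_sub, Matrix.sub_mul]
    congr 1
    · have cP : P.map (C : ℚ →+* ℚ[X]) * Matrix.scalar α (X : ℚ[X]) =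
          Matrix.scalar α (X : ℚ[X]) * P.map C :=
        (Matrix.scalar_commute (X : ℚ[X]) (fun r => Commute.all _ r) (P.map C)).symm
      rw [Matrix.mul_assoc, Matrix.scalar_commute (X : ℚ[X]) (fun r => Commute.all _ r) (Q.map C)]
      rw [← Matrix.mul_assoc, h1, Matrix.one_mul]
    · rw [Matrix.map_mul, Matrix.map_mul]
  unfold Matrix.charpoly
  rw [key, Matrix.det_mul, Matrix.det_mul]
  have : (P.map (C : ℚ →+* ℚ[X])).det * (Q.map C).det = 1 := by
    rw [← Matrix.det_mul, h1, Matrix.det_one]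
  calc (P.map (C : ℚ →+* ℚ[X])).det * (charmatrix D).det * (Q.map C).det
      = (charmatrix D).det * ((P.map C).det * (Q.map C).det) := by ring
    _ = (charmatrix D).det := by rw [this, mul_one]

lemma charpoly_diag {α : Type*} [Fintype α] [DecidableEq α] (d : α → ℚ) :
    (Matrix.diagonal d).charpoly = ∏ a, (X - C (d a)) := by
  have : charmatrix (Matrix.diagonal d) = Matrix.diagonal fun a => (X : ℚ[X]) - C (d a) := by
    ext i j
    rcases eq_or_ne i j with rfl | h
    · simp [charmatrix_apply_eq]
    · rw [charmatrix_apply_ne _ _ _ h]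
      simp [Matrix.diagonal_apply_ne _ h]
  rw [Matrix.charpoly, this, Matrix.det_diagonal]

/-- the change-of-basis matrix (columns: all-ones vector and `e₀ - e_k`). -/
def Pm (n : ℕ) : Matrix (ZMod n) (ZMod n) ℚ :=
  Matrix.of fun x y =>
    (if y = 0 then (1:ℚ) else 0) + (if y ≠ 0 ∧ x = 0 then 1 else 0)
      - (if y ≠ 0 ∧ x = y then 1 else 0)

/-- the inverse of `Pm`. -/
def Qm (n : ℕ) : Matrix (ZMod n) (ZMod n) ℚ :=
  Matrix.of fun t x => (n : ℚ)⁻¹ - (if t ≠ 0 ∧ x = t then 1 else 0)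

/-- diagonal of eigenvalues of `J - I`. -/
def Dd (n : ℕ) : ZMod n → ℚ := fun t => if t = 0 then (n : ℚ) - 1 else -1

lemma hn : ((n : ℚ)) ≠ 0 := Nat.cast_ne_zero.2 (NeZero.ne n)

lemma sumP (y : ZMod n) : ∑ x, Pm n x y = if y = 0 then (n:ℚ) else 0 := by
  simp only [Pm, Matrix.of_apply]
  rw [Finset.sum_sub_distrib, Finset.sum_add_distrib]
  rcases eq_or_ne y 0 with rfl | hy
  · simp [Finset.card_univ, ZMod.card]
  · have h1 : ∑ x : ZMod n, (if y ≠ 0 ∧ x = 0 then (1:ℚ) else 0) = 1 := by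
      simp [hy, Finset.sum_ite_eq']
    have h2 : ∑ x : ZMod n, (if y ≠ 0 ∧ x = y then (1:ℚ) else 0) = 1 := by
      simp [hy, Finset.sum_ite_eq']
    simp [hy, h1, h2]

lemma QP : Qm n * Pm n = 1 := by
  ext t y
  rw [Matrix.mul_apply]
  have step : ∀ x : ZMod n, Qm n t x * Pm n x y =
      (n:ℚ)⁻¹ * Pm n x y - (if t = 0 then 0 else if x = t then Pm n x y else 0) := by
    intro x
    rcases eq_or_ne t 0 with rfl | ht
    · simp [Qm, sub_mul]
    · rcases eq_or_ne x t with rfl | hx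
      · simp [Qm, ht, sub_mul]
      · simp [Qm, ht, hx, sub_mul]
  rw [Finset.sum_congr rfl fun x _ => step x, Finset.sum_sub_distrib, ← Finset.mul_sum, sumP]
  rcases eq_or_ne t 0 with rfl | ht
  · rcases eq_or_ne y 0 with rfl | hy
    · simp [hn, Matrix.one_apply]
    · simp [hy, Ne.symm hy, Matrix.one_apply]
  · have : ∑ x : ZMod n, (if t = 0 then (0:ℚ) else if x = t then Pm n x y else 0) =
        Pm n t y := by
      simp only [ht, if_false]
      rw [Finset.sum_ite_eq' Finset.univ t (fun x => Pm n x y)]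
      simp
    rw [this]
    rcases eq_or_ne y 0 with rfl | hy
    · simp [hn, Pm, ht, Matrix.one_apply, ht]
    · rcases eq_or_ne t y with rfl | hty
      · simp [hy, Pm, ht, Matrix.one_apply]
      · simp [hy, Pm, ht, hty, Matrix.one_apply]

lemma sumP' (x : ZMod n) : ∑ y, Pm n x y = if x = 0 then (n:ℚ) else 0 := by
  rcases eq_or_ne x 0 with rfl | hx
  · have step : ∀ y : ZMod n, Pm n 0 y = 1 := by
      intro y
      rcases eq_or_ne y 0 with rfl | hy
      · simp [Pm]
      · simp [Pm, hy, Ne.symm hy]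
    rw [Finset.sum_congr rfl fun y _ => step y]
    simp [Finset.card_univ, ZMod.card]
  · have step : ∀ y : ZMod n, Pm n x y =
        (if y = 0 then (1:ℚ) else 0) - (if y = x then 1 else 0) := by
      intro y
      rcases eq_or_ne y 0 with rfl | hy
      · simp [Pm, Ne.symm hx]
      · rcases eq_or_ne y x with rfl | hyx
        · simp [Pm, hy, hx]
        · simp [Pm, hy, hyx, Ne.symm hyx, hx]
    rw [Finset.sum_congr rfl fun y _ => step y, Finset.sum_sub_distrib]
    simp [Finset.sum_ite_eq', hx]

lemma PQ : Pm n * Qm n = 1 := by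
  ext x s
  rw [Matrix.mul_apply]
  have step : ∀ y : ZMod n, Pm n x y * Qm n y s =
      (n:ℚ)⁻¹ * Pm n x y - (if s = 0 then 0 else if y = s then Pm n x y else 0) := by
    intro y
    rcases eq_or_ne s 0 with rfl | hs
    · rcases eq_or_ne y 0 with rfl | hy
      · simp [Qm, mul_sub, mul_comm]
      · simp [Qm, mul_sub, mul_comm, hy, Ne.symm hy]
    · rcases eq_or_ne y s with rfl | hys
      · simp [Qm, hs, mul_sub, mul_comm, sub_mul, one_mul]
      · simp [Qm, hs, Ne.symm hys, hys, mul_sub, mul_comm]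
  rw [Finset.sum_congr rfl fun y _ => step y, Finset.sum_sub_distrib, ← Finset.mul_sum, sumP']
  have h2 : ∑ y : ZMod n, (if s = 0 then (0:ℚ) else if y = s then Pm n x y else 0) =
      if s = 0 then 0 else Pm n x s := by
    rcases eq_or_ne s 0 with rfl | hs
    · simp
    · simp only [hs, if_false]
      rw [Finset.sum_ite_eq' Finset.univ s (fun y => Pm n x y)]
      simp
  rw [h2]
  rcases eq_or_ne x 0 with rfl | hx
  · rcases eq_or_ne s 0 with rfl | hs
    · simp [hn, Matrix.one_apply]
    · simp [hn, hs, Ne.symm hs, Pm, Matrix.one_apply]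
  · rcases eq_or_ne s 0 with rfl | hs
    · simp [hx, Pm, Matrix.one_apply]
    · rcases eq_or_ne x s with rfl | hxs
      · simp [hx, hs, Pm, Matrix.one_apply]
      · simp [hx, hs, hxs, Pm, Matrix.one_apply]

lemma sumE (x : ZMod n) : ∑ t, Pm n x t * Dd n t = if x = 0 then 0 else (n:ℚ) := by
  rcases eq_or_ne x 0 with rfl | hx
  · have step : ∀ t : ZMod n, Pm n 0 t * Dd n t = -1 + (if t = 0 then (n:ℚ) else 0) := by
      intro t
      rcases eq_or_ne t 0 with rfl | ht
      · simp [Pm, Dd]; ring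
      · simp [Pm, Dd, ht, Ne.symm ht]
    rw [Finset.sum_congr rfl fun t _ => step t, Finset.sum_add_distrib]
    simp [Finset.card_univ, ZMod.card]
  · have step : ∀ t : ZMod n, Pm n x t * Dd n t =
        (if t = 0 then (n:ℚ) - 1 else 0) + (if t = x then 1 else 0) := by
      intro t
      rcases eq_or_ne t 0 with rfl | ht
      · simp [Pm, Dd, Ne.symm hx]
      · rcases eq_or_ne t x with rfl | htx
        · simp [Pm, Dd, ht, hx]
        · simp [Pm, Dd, ht, htx, Ne.symm htx, hx]
    rw [Finset.sum_congr rfl fun t _ => step t, Finset.sum_add_distrib]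
    simp [Finset.sum_ite_eq', hx]

lemma PDQ : Pm n * Matrix.diagonal (Dd n) * Qm n =
    Matrix.of fun x y : ZMod n => if x ≠ y then (1:ℚ) else 0 := by
  ext x s
  rw [Matrix.mul_apply]
  have hmd : ∀ t : ZMod n, (Pm n * Matrix.diagonal (Dd n)) x t = Pm n x t * Dd n t := by
    intro t; rw [Matrix.mul_diagonal]
  have step : ∀ t : ZMod n, (Pm n * Matrix.diagonal (Dd n)) x t * Qm n t s =
      (n:ℚ)⁻¹ * (Pm n x t * Dd n t) -
        (if s = 0 then 0 else if t = s then Pm n x t * Dd n t else 0) := by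
    intro t
    rw [hmd]
    rcases eq_or_ne s 0 with rfl | hs
    · rcases eq_or_ne t 0 with rfl | ht
      · simp [Qm, mul_sub, mul_comm]
      · simp [Qm, mul_sub, mul_comm, ht, Ne.symm ht]
    · rcases eq_or_ne t s with rfl | hts
      · simp [Qm, hs, mul_sub, mul_comm, sub_mul, one_mul]
      · simp [Qm, hs, Ne.symm hts, hts, mul_sub, mul_comm]
  rw [Finset.sum_congr rfl fun t _ => step t, Finset.sum_sub_distrib, ← Finset.mul_sum, sumE]
  have h2 : ∑ t : ZMod n, (if s = 0 then (0:ℚ) else if t = s then Pm n x t * Dd n t else 0) =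
      if s = 0 then 0 else Pm n x s * Dd n s := by
    rcases eq_or_ne s 0 with rfl | hs
    · simp
    · simp only [hs, if_false]
      rw [Finset.sum_ite_eq' Finset.univ s (fun t => Pm n x t * Dd n t)]
      simp
  rw [h2]
  rcases eq_or_ne x 0 with rfl | hx
  · rcases eq_or_ne s 0 with rfl | hs
    · simp
    · simp [hs, Ne.symm hs, Pm, Dd]
  · rcases eq_or_ne s 0 with rfl | hs
    · simp [hx, hn]
    · rcases eq_or_ne x s with rfl | hxs
      · simp [hx, hs, Pm, Dd, hn]
      · simp [hx, hs, hxs, Pm, Dd, hn]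

omit [NeZero n] in
lemma expo (m r : ℕ) : (m+1).choose r * (n-1)^(m+1-r) =
    (if r = 0 then 0 else m.choose (r-1) * (n-1)^(m+1-r))
      + m.choose r * (n-1)^(m-r) * (n-1) := by
  rcases r with _ | s
  · simp [pow_succ]
  · simp only [if_neg (Nat.succ_ne_zero s), Nat.succ_sub_one, Nat.succ_sub_succ,
      Nat.choose_succ_succ, add_mul]
    congr 1
    rcases le_or_gt (s+1) m with h | h
    · have h2 : m - s = (m - (s+1)) + 1 := by omega
      rw [h2, pow_succ, mul_assoc]
    · rw [Nat.choose_eq_zero_of_lt h]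
      simp

lemma count_prod (f : ℕ → ℚ[X]) :
    ∀ m : ℕ, (∏ x : Fin m → ZMod n, f (∑ i, if x i = 0 then 1 else 0)) =
      ∏ r ∈ Finset.range (m + 1), f r ^ (Nat.choose m r * (n - 1) ^ (m - r)) := by
  intro m
  induction m generalizing f with
  | zero => simp
  | succ m ih =>
    let e : (ZMod n × (Fin m → ZMod n)) ≃ (Fin (m + 1) → ZMod n) :=
      Fin.consEquiv (fun _ => ZMod n)
    have key : ∀ p : ZMod n × (Fin m → ZMod n),
        (∑ i : Fin (m+1), if (e p) i = 0 then 1 else 0) =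
          (if p.1 = 0 then 1 else 0) + ∑ i, if p.2 i = 0 then 1 else 0 := by
      intro p
      have hep : e p = Fin.cons p.1 p.2 := rfl
      rw [Fin.sum_univ_succ, hep]
      simp [Fin.cons_zero, Fin.cons_succ]
    calc (∏ x : Fin (m+1) → ZMod n, f (∑ i, if x i = 0 then 1 else 0))
        = ∏ p : ZMod n × (Fin m → ZMod n),
            f ((if p.1 = 0 then 1 else 0) + ∑ i, if p.2 i = 0 then 1 else 0) := by
          rw [← Equiv.prod_comp e (fun x => f (∑ i, if x i = 0 then 1 else 0))]
          exact Finset.prod_congr rfl fun p _ => by rw [key]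
      _ = ∏ a : ZMod n, ∏ x : Fin m → ZMod n,
            f ((if a = 0 then 1 else 0) + ∑ i, if x i = 0 then 1 else 0) := by
          rw [Fintype.prod_prod_type]
      _ = (∏ x : Fin m → ZMod n, f ((∑ i, if x i = 0 then 1 else 0) + 1)) *
          (∏ x : Fin m → ZMod n, f (∑ i, if x i = 0 then 1 else 0)) ^ (n - 1) := by
          rw [← Finset.mul_prod_erase Finset.univ _ (Finset.mem_univ (0 : ZMod n))]
          congr 1
          · exact Finset.prod_congr rfl fun x _ => by rw [if_pos rfl, add_comm]
          · rw [Finset.prod_congr rfl (fun a ha => ?_), Finset.prod_const,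
              Finset.card_erase_of_mem (Finset.mem_univ _), Finset.card_univ, ZMod.card]
            have ha' : a ≠ 0 := (Finset.mem_erase.1 ha).1
            simp [ha']
      _ = (∏ r ∈ Finset.range (m+1), f (r+1) ^ (m.choose r * (n-1)^(m-r))) *
          ((∏ r ∈ Finset.range (m+1), f r ^ (m.choose r * (n-1)^(m-r)))) ^ (n-1) := by
          rw [ih (fun r => f (r+1)), ih f]
      _ = ∏ r ∈ Finset.range (m + 1 + 1), f r ^ ((m+1).choose r * (n - 1) ^ (m + 1 - r)) := by
          symm
          rw [Finset.prod_congr rfl (fun r _ => by rw [expo (n := n) m r, pow_add]),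
            Finset.prod_mul_distrib]
          congr 1
          · rw [Finset.prod_range_succ', if_pos rfl, pow_zero, mul_one]
            exact Finset.prod_congr rfl fun r _ => by
              rw [if_neg (Nat.succ_ne_zero r), Nat.succ_sub_one, Nat.succ_sub_succ]
          · rw [Finset.prod_range_succ, Nat.choose_succ_self, zero_mul, zero_mul, pow_zero,
              mul_one, ← Finset.prod_pow]
            exact Finset.prod_congr rfl fun r _ => by rw [pow_mul]

end TransversalAux

/-- the disjointness matrix `A` of transversals (identified with
`(ℤ/n)^m`, two transversals adjacent iff they differ in every coordinate) has
eigenvalues `(-1)^{m-r} (n-1)^r` with multiplicity `C(m,r) (n-1)^{m-r}`,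
`0 ≤ r ≤ m`; equivalently its characteristic polynomial factors accordingly. -/
theorem transversal_disjointness_eigenvalues (m n : ℕ) [NeZero n] :
    (Matrix.of fun x y : Fin m → ZMod n =>
        if ∀ i, x i ≠ y i then (1 : ℚ) else 0).charpoly =
      ∏ r ∈ Finset.range (m + 1),
        (X - C ((-1 : ℚ) ^ (m - r) * ((n : ℚ) - 1) ^ r)) ^
          (Nat.choose m r * (n - 1) ^ (m - r)) := by
  classical
  open TransversalAux in
  have hA : (Matrix.of fun x y : Fin m → ZMod n =>
        if ∀ i, x i ≠ y i then (1 : ℚ) else 0)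
      = T m (Matrix.of fun x y : ZMod n => if x ≠ y then (1:ℚ) else 0) := by
    ext x y
    simp only [T, Matrix.of_apply]
    rw [Fintype.prod_boole]
    congr 1
  rw [hA, ← PDQ, T_mul, T_mul]
  rw [charpoly_conj _ _ _ (by rw [← T_mul, PQ, T_one]) (by rw [← T_mul, QP, T_one])]
  have hdiag : T m (Matrix.diagonal (Dd n)) =
      Matrix.diagonal (fun x : Fin m → ZMod n => ∏ i, Dd n (x i)) := by
    ext x y
    rcases eq_or_ne x y with rfl | h
    · simp [T, Matrix.diagonal_apply_eq]
    · obtain ⟨i, hi⟩ : ∃ i, x i ≠ y i := by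
        by_contra hc
        push_neg at hc
        exact h (funext hc)
      simp only [T, Matrix.of_apply, Matrix.diagonal_apply_ne _ h]
      exact Finset.prod_eq_zero (Finset.mem_univ i) (by simp [Matrix.diagonal_apply_ne _ hi])
  rw [hdiag, charpoly_diag]
  have hval : ∀ x : Fin m → ZMod n, ∏ i, Dd n (x i) =
      (-1:ℚ)^(m - (∑ i, if x i = 0 then 1 else 0)) *
        ((n:ℚ)-1)^((∑ i, if x i = 0 then 1 else 0) : ℕ) := by
    intro x
    have hc : (Finset.univ.filter fun i => x i = 0).card =
        ∑ i, if x i = 0 then 1 else 0 := Finset.card_filter _ _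
    have hcc : (Finset.univ.filter fun i => ¬ x i = 0).card =
        m - ∑ i, if x i = 0 then 1 else 0 := by
      have := Finset.card_filter_add_card_filter_not
        (s := (Finset.univ : Finset (Fin m))) (p := fun i => x i = 0)
      simp only [Finset.card_univ, Fintype.card_fin] at this
      omega
    calc ∏ i, Dd n (x i)
        = ∏ i, (if x i = 0 then (n:ℚ)-1 else -1) := rfl
      _ = ((n:ℚ)-1)^((∑ i, if x i = 0 then 1 else 0) : ℕ) *
            (-1:ℚ)^(m - (∑ i, if x i = 0 then 1 else 0)) := by
          rw [Finset.prod_ite, Finset.prod_const, Finset.prod_const, hc, hcc]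
      _ = _ := by ring
  rw [Finset.prod_congr rfl fun x (_ : x ∈ Finset.univ) => by rw [hval x]]
  exact count_prod (fun r => X - C ((-1:ℚ)^(m-r) * ((n:ℚ)-1)^r)) m
end

section
/- With notation as in the transversal/Hamming example, the Smith normal form of the disjointness matrix A of transversals has diagonal entries (n-1)^r with multiplicity binom(m,r)(n-1)^{m-r} for 0 ≤ r ≤ m (after suitable ordering and up to signs); in particular |det A| = (n-1)^{Σ_r r·binom(m,r)(n-1)^{m-r}}. -/
set_option maxRecDepth 8000

open Matrix Finset Kronecker



namespace TSNF

variable (n : ℕ)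

def Bm : Matrix (ZMod n) (ZMod n) ℤ := Matrix.of fun x y => if x ≠ y then 1 else 0

def Pm : Matrix (ZMod n) (ZMod n) ℤ := Matrix.of fun i j =>
  if i = 0 then (if j = 0 then 2 - (n : ℤ) else 1)
  else ((if j = i then 1 else 0) - (if j = 0 then 1 else 0))

def Pinv : Matrix (ZMod n) (ZMod n) ℤ := Matrix.of fun j k =>
  if k = 0 then 1 else ((if j = k then 1 else 0) - 1)

def Qm : Matrix (ZMod n) (ZMod n) ℤ := Matrix.of fun j k =>
  if k = 0 then 1 else (if j = k then 1 else 0)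

def Qinv : Matrix (ZMod n) (ZMod n) ℤ := Matrix.of fun j k =>
  if k = 0 then (if j = 0 then 1 else -1) else (if j = k then 1 else 0)

def dv : ZMod n → ℤ := fun i => if i = 0 then (n : ℤ) - 1 else -1

variable [NeZero n]

lemma sum_delta (c : ZMod n) (f : ZMod n → ℤ) :
    ∑ k, (if k = c then f k else 0) = f c := by
  rw [Finset.sum_ite_eq' Finset.univ c f]; simp

lemma sum_ones : ∑ _k : ZMod n, (1 : ℤ) = n := by
  simp [Finset.card_univ, ZMod.card]

lemma P_rowsum (i : ZMod n) : ∑ k, Pm n i k = if i = 0 then 1 else 0 := by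
  by_cases hi : i = 0
  · have h1 : ∑ k, Pm n i k
        = ∑ k : ZMod n, ((if k = 0 then 1 - (n:ℤ) else 0) + 1) := by
      refine Finset.sum_congr rfl fun k _ => ?_
      simp only [Pm, Matrix.of_apply, if_pos hi]
      split <;> ring
    rw [h1, Finset.sum_add_distrib, sum_delta, sum_ones, if_pos hi]; ring
  · have h1 : ∑ k, Pm n i k
        = (∑ k : ZMod n, (if k = i then (1:ℤ) else 0))
          - (∑ k : ZMod n, (if k = 0 then (1:ℤ) else 0)) := by
      rw [← Finset.sum_sub_distrib]
      exact Finset.sum_congr rfl fun k _ => by simp only [Pm, Matrix.of_apply, if_neg hi]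
    rw [h1, sum_delta, sum_delta, if_neg hi]; ring

lemma P_mul_Pinv : Pm n * Pinv n = 1 := by
  ext i k
  rw [Matrix.mul_apply]
  by_cases hk : k = 0
  · have h1 : ∑ j, Pm n i j * Pinv n j k = ∑ j, Pm n i j := by
      refine Finset.sum_congr rfl fun j _ => ?_
      simp only [Pinv, Matrix.of_apply, if_pos hk, mul_one]
    rw [h1, P_rowsum]
    subst hk
    simp only [Matrix.one_apply]
  · have h1 : ∑ j, Pm n i j * Pinv n j k
        = (∑ j, (if j = k then Pm n i j else 0)) - ∑ j, Pm n i j := by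
      rw [← Finset.sum_sub_distrib]
      refine Finset.sum_congr rfl fun j _ => ?_
      simp only [Pinv, Matrix.of_apply, if_neg hk]
      split <;> ring
    rw [h1, sum_delta, P_rowsum]
    simp only [Pm, Matrix.of_apply, Matrix.one_apply]
    split_ifs <;> subst_vars <;> first | ring1 | (exfalso; simp_all) | simp_all

lemma Q_mul_Qinv : Qm n * Qinv n = 1 := by
  ext i k
  rw [Matrix.mul_apply]
  by_cases hk : k = 0
  · have h1 : ∑ j, Qm n i j * Qinv n j k
        = (∑ j : ZMod n, (if j = 0 then (1:ℤ) else 0))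
          - ∑ j : ZMod n, (if j = i then (if i = 0 then (0:ℤ) else 1) else 0) := by
      rw [← Finset.sum_sub_distrib]
      refine Finset.sum_congr rfl fun j _ => ?_
      simp only [Qm, Qinv, Matrix.of_apply, if_pos hk]
      split_ifs <;> subst_vars <;> first | ring1 | (exfalso; simp_all) | simp_all
    rw [h1, sum_delta, sum_delta]
    simp only [Matrix.one_apply]
    split_ifs <;> subst_vars <;> first | ring1 | (exfalso; simp_all) | simp_all
  · have h1 : ∑ j, Qm n i j * Qinv n j k
        = ∑ j, (if j = k then Qm n i j else 0) := by
      refine Finset.sum_congr rfl fun j _ => ?_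
      simp only [Qinv, Matrix.of_apply, if_neg hk]
      split <;> ring
    rw [h1, sum_delta]
    simp only [Qm, Matrix.of_apply, Matrix.one_apply]
    split_ifs <;> subst_vars <;> first | ring1 | (exfalso; simp_all) | simp_all

lemma P_mul_B : Pm n * Bm n = Matrix.of (fun i j =>
    if i = 0 then (if j = 0 then (n:ℤ) - 1 else 0)
    else ((if j = 0 then 1 else 0) - (if j = i then 1 else 0))) := by
  ext i j
  rw [Matrix.mul_apply]
  have h1 : ∑ k, Pm n i k * Bm n k j
      = (∑ k, Pm n i k) - ∑ k, (if k = j then Pm n i k else 0) := by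
    rw [← Finset.sum_sub_distrib]
    refine Finset.sum_congr rfl fun k _ => ?_
    simp only [Bm, Matrix.of_apply, ne_eq, ite_not]
    split <;> ring
  rw [h1, sum_delta, P_rowsum]
  simp only [Pm, Matrix.of_apply]
  split_ifs <;> subst_vars <;> first | ring1 | (exfalso; simp_all) | simp_all

lemma P_mul_B_mul_Q : Pm n * Bm n * Qm n = Matrix.diagonal (dv n) := by
  rw [P_mul_B]
  ext i j
  rw [Matrix.mul_apply]
  by_cases hj : j = 0
  · have h1 : ∑ k, (Matrix.of (fun i j =>
        if i = 0 then (if j = 0 then (n:ℤ) - 1 else 0)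
        else ((if j = 0 then 1 else 0) - (if j = i then 1 else 0)))) i k * Qm n k j
        = (∑ k : ZMod n, (if k = 0 then (if i = 0 then (n:ℤ) - 1 else 1) else 0))
          - ∑ k : ZMod n, (if k = i then (if i = 0 then (0:ℤ) else 1) else 0) := by
      rw [← Finset.sum_sub_distrib]
      refine Finset.sum_congr rfl fun k _ => ?_
      simp only [Qm, Matrix.of_apply, if_pos hj, mul_one]
      split_ifs <;> subst_vars <;> first | ring1 | (exfalso; simp_all) | simp_all
    rw [h1, sum_delta, sum_delta]
    simp only [Matrix.diagonal_apply, dv]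
    split_ifs <;> subst_vars <;> first | ring1 | (exfalso; simp_all) | simp_all
  · have h1 : ∑ k, (Matrix.of (fun i j =>
        if i = 0 then (if j = 0 then (n:ℤ) - 1 else 0)
        else ((if j = 0 then 1 else 0) - (if j = i then 1 else 0)))) i k * Qm n k j
        = ∑ k, (if k = j then (if i = 0 then (if k = 0 then (n:ℤ) - 1 else 0)
            else ((if k = 0 then 1 else 0) - (if k = i then 1 else 0))) else 0) := by
      refine Finset.sum_congr rfl fun k _ => ?_
      simp only [Qm, Matrix.of_apply, if_neg hj]
      split_ifs <;> subst_vars <;> first | ring1 | (exfalso; simp_all) | simp_all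
    rw [h1, sum_delta]
    simp only [Matrix.diagonal_apply, dv]
    split_ifs <;> subst_vars <;> first | ring1 | (exfalso; simp_all) | simp_all

end TSNF

namespace T2


lemma smul_bind {α β : Type*} (c : ℕ) (s : Multiset α) (f : α → Multiset β) :
    c • s.bind f = s.bind fun a => c • f a := by
  induction s using Multiset.induction with
  | empty => simp
  | cons a s ih => simp [Multiset.cons_bind, ih, smul_add]

lemma range_succ' (k : ℕ) :
    Multiset.range (k + 1) = 0 ::ₘ (Multiset.range k).map Nat.succ := by
  rw [Multiset.range, List.range_succ_eq_map]
  rfl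

def T (c m : ℕ) : Multiset ℕ :=
  (Multiset.range (m + 1)).bind fun r =>
    Multiset.replicate (m.choose r * c ^ (m - r)) (c ^ r)

lemma Tstep (c m : ℕ) :
    (T c m).map (fun v => c * v) + c • T c m = T c (m + 1) := by
  have hmap : (T c m).map (fun v => c * v)
      = (Multiset.range (m + 1)).bind fun r =>
          Multiset.replicate (m.choose r * c ^ (m - r)) (c ^ (r + 1)) := by
    rw [T, Multiset.map_bind]
    refine Multiset.bind_congr fun r _ => ?_
    rw [Multiset.map_replicate, pow_succ]
    ring_nf
  have hsmul : c • T c m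
      = (Multiset.range (m + 1)).bind fun r =>
          Multiset.replicate (m.choose r * c ^ (m + 1 - r)) (c ^ r) := by
    rw [T, smul_bind]
    refine Multiset.bind_congr fun r hr => ?_
    rw [Multiset.nsmul_replicate]
    congr 1
    have hrm : r ≤ m := by have := Multiset.mem_range.mp hr; omega
    rw [show m + 1 - r = (m - r) + 1 by omega, pow_succ]
    ring
  set mid := (Multiset.range m).bind fun r =>
      Multiset.replicate (m.choose (r + 1) * c ^ (m - r)) (c ^ (r + 1)) with hmid
  have hswap : ((Multiset.range (m + 1)).bind fun r =>
        Multiset.replicate (m.choose r * c ^ (m + 1 - r)) (c ^ r))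
      = Multiset.replicate (c ^ (m + 1)) 1 + mid := by
    rw [range_succ', Multiset.cons_bind, Multiset.bind_map]
    congr 1
    · simp
    · refine Multiset.bind_congr fun r _ => ?_
      rw [Nat.succ_sub_succ]
  have hRHS : T c (m + 1)
      = Multiset.replicate (c ^ (m + 1)) 1
        + (((Multiset.range (m + 1)).bind fun r =>
            Multiset.replicate (m.choose r * c ^ (m - r)) (c ^ (r + 1)))
          + mid) := by
    rw [T, range_succ', Multiset.cons_bind, Multiset.bind_map]
    congr 1
    · simp
    · have h1 : ((Multiset.range (m + 1)).bind fun r =>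
          Multiset.replicate ((m + 1).choose (Nat.succ r) * c ^ (m + 1 - Nat.succ r))
            (c ^ Nat.succ r))
          = ((Multiset.range (m + 1)).bind fun r =>
              Multiset.replicate (m.choose r * c ^ (m - r)) (c ^ (r + 1)))
            + ((Multiset.range (m + 1)).bind fun r =>
              Multiset.replicate (m.choose (r + 1) * c ^ (m - r)) (c ^ (r + 1))) := by
        rw [← Multiset.bind_add]
        refine Multiset.bind_congr fun r _ => ?_
        rw [Nat.succ_sub_succ, Nat.choose_succ_succ, add_mul, Multiset.replicate_add]
      rw [h1]
      congr 1
      rw [Multiset.range_succ, Multiset.cons_bind, Nat.choose_succ_self, zero_mul,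
        Multiset.replicate_zero, zero_add, hmid]
  rw [hmap, hsmul, hswap, hRHS]
  abel



def g (n : ℕ) : ZMod n → ℕ := fun a => if a = 0 then n - 1 else 1

lemma bind_const {α β : Type*} (s : Multiset α) (L : Multiset β) :
    (s.bind fun _ => L) = Multiset.card s • L := by
  induction s using Multiset.induction with
  | empty => simp
  | cons a s ih => simp [Multiset.cons_bind, ih, add_nsmul, add_comm]

lemma count (n : ℕ) [NeZero n] :
    ∀ m : ℕ, (Finset.univ.val.map fun x : Fin m → ZMod n => ∏ i, g n (x i))
      = T (n - 1) m := by
  intro m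
  induction m with
  | zero =>
    have h1 : (Finset.univ.val.map fun x : Fin 0 → ZMod n => ∏ i, g n (x i))
        = Finset.univ.val.map (fun _ : Fin 0 → ZMod n => 1) :=
      Multiset.map_congr rfl fun x _ => by simp
    rw [h1, Finset.univ_unique]
    simp [T, Multiset.range_succ]
  | succ m ih =>
    set e := ((Fin.consEquiv (fun _ : Fin (m + 1) => ZMod n)).symm).symm with he
    have huniv : (Finset.univ : Finset (Fin (m+1) → ZMod n))
        = (Finset.univ : Finset (ZMod n × (Fin m → ZMod n))).map e.toEmbedding :=
      (Finset.map_univ_equiv e).symm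
    rw [huniv, Finset.map_val, Multiset.map_map]
    have hval : (Finset.univ : Finset (ZMod n × (Fin m → ZMod n))).val
        = (Finset.univ : Finset (ZMod n)).val.bind
            fun a => (Finset.univ : Finset (Fin m → ZMod n)).val.map (Prod.mk a) := by
      rw [← Finset.univ_product_univ, Finset.product_val]
      rfl
    rw [hval, Multiset.map_bind]
    have hinner : ∀ a : ZMod n,
        (Multiset.map ((fun x : Fin (m+1) → ZMod n => ∏ i, g n (x i)) ∘ e.toEmbedding)
          (Multiset.map (Prod.mk a) Finset.univ.val))
        = Multiset.map (fun f : Fin m → ZMod n => g n a * ∏ i, g n (f i)) Finset.univ.val := by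
      intro a
      rw [Multiset.map_map]
      refine Multiset.map_congr rfl fun f _ => ?_
      simp only [Function.comp_apply, Equiv.coe_toEmbedding, he,
        Equiv.symm_symm, Fin.consEquiv_apply]
      rw [Fin.prod_univ_succ]
      simp
    rw [Multiset.bind_congr fun a _ => hinner a]
    have hz : (Finset.univ : Finset (ZMod n)).val
        = 0 ::ₘ (Finset.univ.erase (0 : ZMod n)).val := by
      rw [← Finset.insert_val_of_notMem (Finset.notMem_erase _ _),
        Finset.insert_erase (Finset.mem_univ _)]
    rw [hz, Multiset.cons_bind]
    have h0 : Multiset.map (fun f : Fin m → ZMod n => g n 0 * ∏ i, g n (f i)) Finset.univ.val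
        = (Multiset.map (fun f : Fin m → ZMod n => ∏ i, g n (f i)) Finset.univ.val).map
            (fun v => (n - 1) * v) := by
      rw [Multiset.map_map]
      refine Multiset.map_congr rfl fun f _ => ?_
      simp [g]
    have h1 : ((Finset.univ.erase (0 : ZMod n)).val.bind
        fun a => Multiset.map (fun f : Fin m → ZMod n => g n a * ∏ i, g n (f i)) Finset.univ.val)
        = (n - 1) • Multiset.map (fun f : Fin m → ZMod n => ∏ i, g n (f i)) Finset.univ.val := by
      have : ∀ a ∈ (Finset.univ.erase (0 : ZMod n)).val,
          Multiset.map (fun f : Fin m → ZMod n => g n a * ∏ i, g n (f i)) Finset.univ.val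
          = Multiset.map (fun f : Fin m → ZMod n => ∏ i, g n (f i)) Finset.univ.val := by
        intro a ha
        have ha' : a ≠ 0 := (Finset.mem_erase.mp ha).1
        refine Multiset.map_congr rfl fun f _ => ?_
        simp [g, ha']
      rw [Multiset.bind_congr this, bind_const]
      congr 1
      have : (Finset.univ.erase (0 : ZMod n)).card = n - 1 := by
        rw [Finset.card_erase_of_mem (Finset.mem_univ _), Finset.card_univ, ZMod.card]
      simpa using this
    rw [h0, h1, ih, Tstep]



def Am (m n : ℕ) : Matrix (Fin m → ZMod n) (Fin m → ZMod n) ℤ :=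
  Matrix.of fun x y : Fin m → ZMod n => if ∀ i, x i ≠ y i then (1 : ℤ) else 0

lemma A_succ (m n : ℕ) : Am (m + 1) n
    = ((TSNF.Bm n) ⊗ₖ (Am m n)).submatrix ((Fin.consEquiv (fun _ : Fin (m + 1) => ZMod n)).symm)
        ((Fin.consEquiv (fun _ : Fin (m + 1) => ZMod n)).symm) := by
  ext x y
  have hcond : (∀ i : Fin (m + 1), x i ≠ y i)
      ↔ (x 0 ≠ y 0 ∧ ∀ i : Fin m, x i.succ ≠ y i.succ) := Fin.forall_iff_succ
  simp only [Am, TSNF.Bm, Matrix.submatrix_apply, Matrix.kroneckerMap_apply,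
    Matrix.of_apply, Fin.consEquiv_symm_apply]
  by_cases h1 : x 0 ≠ y 0 <;> by_cases h2 : ∀ i : Fin m, x i.succ ≠ y i.succ <;>
    simp [hcond, h1, h2, Fin.tail]

lemma dv_natAbs (n : ℕ) [NeZero n] (a : ZMod n) : (TSNF.dv n a).natAbs = g n a := by
  by_cases h : a = 0
  · have h1 : (1 : ℕ) ≤ n := Nat.one_le_iff_ne_zero.mpr (NeZero.ne n)
    have : ((n : ℤ) - 1) = ((n - 1 : ℕ) : ℤ) := by push_cast [h1]; ring
    simp [TSNF.dv, g, h, this]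
  · simp [TSNF.dv, g, h]

lemma key (n : ℕ) [NeZero n] (m : ℕ) :
    ∃ (P Q Pi Qi : Matrix (Fin m → ZMod n) (Fin m → ZMod n) ℤ)
      (d : (Fin m → ZMod n) → ℤ),
      P * Pi = 1 ∧ Q * Qi = 1 ∧ P * Am m n * Q = Matrix.diagonal d ∧
      ∀ x, (d x).natAbs = ∏ i, g n (x i) := by
  induction m with
  | zero =>
    refine ⟨1, 1, 1, 1, fun _ => 1, by simp, by simp, ?_, fun x => by simp⟩
    rw [one_mul, mul_one]
    ext x y
    have hxy : x = y := Subsingleton.elim x y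
    subst hxy
    simp [Am, Matrix.diagonal_apply_eq]
  | succ m ih =>
    obtain ⟨P, Q, Pi, Qi, d, hP, hQ, hD, hd⟩ := ih
    set e := (Fin.consEquiv (fun _ : Fin (m + 1) => ZMod n)).symm with he
    refine ⟨((TSNF.Pm n) ⊗ₖ P).submatrix e e, ((TSNF.Qm n) ⊗ₖ Q).submatrix e e,
      ((TSNF.Pinv n) ⊗ₖ Pi).submatrix e e, ((TSNF.Qinv n) ⊗ₖ Qi).submatrix e e,
      fun x => TSNF.dv n (x 0) * d (fun i => x i.succ), ?_, ?_, ?_, ?_⟩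
    · rw [Matrix.submatrix_mul_equiv, ← Matrix.mul_kronecker_mul, TSNF.P_mul_Pinv, hP,
        Matrix.one_kronecker_one, Matrix.submatrix_one_equiv]
    · rw [Matrix.submatrix_mul_equiv, ← Matrix.mul_kronecker_mul, TSNF.Q_mul_Qinv, hQ,
        Matrix.one_kronecker_one, Matrix.submatrix_one_equiv]
    · rw [A_succ, Matrix.submatrix_mul_equiv, Matrix.submatrix_mul_equiv,
        ← Matrix.mul_kronecker_mul, ← Matrix.mul_kronecker_mul, TSNF.P_mul_B_mul_Q, hD,
        Matrix.diagonal_kronecker_diagonal, Matrix.submatrix_diagonal_equiv]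
      rfl
    · intro x
      rw [Int.natAbs_mul, hd, dv_natAbs, Fin.prod_univ_succ]


end T2


/-- the disjointness matrix `A` of transversals (identified with
`(ℤ/n)^m`) has a diagonal (Smith) form whose diagonal entries, up to sign and
after suitable ordering, are `(n-1)^r` with multiplicity `C(m,r)(n-1)^{m-r}`
for `0 ≤ r ≤ m`; in particular
`|det A| = (n-1)^{Σ_r r·C(m,r)(n-1)^{m-r}}`. -/
theorem transversal_disjointness_snf (m n : ℕ) [NeZero n] :
    (∃ (P Q : Matrix (Fin m → ZMod n) (Fin m → ZMod n) ℤ)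
      (d : (Fin m → ZMod n) → ℤ),
      IsUnit P.det ∧ IsUnit Q.det ∧
      P * (Matrix.of fun x y : Fin m → ZMod n =>
          if ∀ i, x i ≠ y i then (1 : ℤ) else 0) * Q = Matrix.diagonal d ∧
      Finset.univ.val.map (fun x => (d x).natAbs) =
        (Finset.range (m + 1)).val.bind (fun r =>
          Multiset.replicate (Nat.choose m r * (n - 1) ^ (m - r)) ((n - 1) ^ r))) ∧
    (Matrix.of fun x y : Fin m → ZMod n =>
        if ∀ i, x i ≠ y i then (1 : ℤ) else 0).det.natAbs =
      (n - 1) ^ (∑ r ∈ Finset.range (m + 1),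
        r * (Nat.choose m r * (n - 1) ^ (m - r))) := by
  obtain ⟨P, Q, Pi, Qi, d, hP, hQ, hD, hd⟩ := T2.key n m
  have hA : (Matrix.of fun x y : Fin m → ZMod n =>
      if ∀ i, x i ≠ y i then (1 : ℤ) else 0) = T2.Am m n := rfl
  have hPu : IsUnit P.det :=
    IsUnit.of_mul_eq_one Pi.det (by rw [← Matrix.det_mul, hP, Matrix.det_one])
  have hQu : IsUnit Q.det :=
    IsUnit.of_mul_eq_one Qi.det (by rw [← Matrix.det_mul, hQ, Matrix.det_one])
  have hmult : Finset.univ.val.map (fun x => (d x).natAbs)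
      = (Finset.range (m + 1)).val.bind (fun r =>
          Multiset.replicate (Nat.choose m r * (n - 1) ^ (m - r)) ((n - 1) ^ r)) := by
    have h1 : Finset.univ.val.map (fun x => (d x).natAbs)
        = Finset.univ.val.map (fun x : Fin m → ZMod n => ∏ i, T2.g n (x i)) :=
      Multiset.map_congr rfl fun x _ => hd x
    rw [h1, T2.count n m]
    rfl
  refine ⟨⟨P, Q, d, hPu, hQu, by rw [hA]; exact hD, hmult⟩, ?_⟩
  -- determinant part
  have hdet : P.det * (T2.Am m n).det * Q.det = ∏ x, d x := by
    have := congrArg Matrix.det hD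
    rwa [Matrix.det_mul, Matrix.det_mul, Matrix.det_diagonal] at this
  have habs1 : P.det.natAbs = 1 := by
    rcases Int.isUnit_iff.mp hPu with h | h <;> simp [h]
  have habs2 : Q.det.natAbs = 1 := by
    rcases Int.isUnit_iff.mp hQu with h | h <;> simp [h]
  have h2 : (T2.Am m n).det.natAbs = (∏ x, d x).natAbs := by
    rw [← hdet, Int.natAbs_mul, Int.natAbs_mul, habs1, habs2, one_mul, mul_one]
  have h3 : (∏ x, d x).natAbs = ∏ x, (d x).natAbs := by
    exact map_prod Int.natAbsHom d Finset.univ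
  have h4 : (∏ x, (d x).natAbs)
      = (Finset.univ.val.map (fun x => (d x).natAbs)).prod := by
    rfl
  rw [hA, h2, h3, h4, hmult]
  have h5 : ((Finset.range (m + 1)).val.bind (fun r =>
      Multiset.replicate (Nat.choose m r * (n - 1) ^ (m - r)) ((n - 1) ^ r))).prod
      = ∏ r ∈ Finset.range (m + 1),
          ((n - 1) ^ r) ^ (Nat.choose m r * (n - 1) ^ (m - r)) := by
    rw [Multiset.prod_bind]
    rw [Finset.prod]
    congr 1
    exact Multiset.map_congr rfl fun r _ => Multiset.prod_replicate _ _
  rw [h5]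
  have h6 : ∀ r, ((n - 1) ^ r) ^ (Nat.choose m r * (n - 1) ^ (m - r))
      = (n - 1) ^ (r * (Nat.choose m r * (n - 1) ^ (m - r))) := fun r => (pow_mul _ _ _).symm
  rw [Finset.prod_congr rfl fun r _ => h6 r, Finset.prod_pow_eq_pow_sum]
end

section
/- (Wilson) Let W_{t,k} be the inclusion matrix of t-subsets versus k-subsets of an n-set, with t ≤ k and t + k ≤ n. Then W_{t,k} has a diagonal form over ℤ with diagonal entries binom(k-i, t-i), each occurring with multiplicity binom(n,i) - binom(n,i-1), for 0 ≤ i ≤ t. -/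
open Finset

namespace Wilson

/-- Ballot condition: the `j`-th smallest element `x` (1-indexed) satisfies `2j ≤ x+1`. -/
def Good (A : Finset ℕ) : Prop := ∀ x ∈ A, 2 * (A.filter (· ≤ x)).card ≤ x + 1

instance : DecidablePred Good := fun A => by unfold Good; infer_instance

lemma Good.mono {A B : Finset ℕ} (h : Good B) (hAB : A ⊆ B) : Good A := fun x hx =>
  le_trans (by
    have := Finset.card_le_card (Finset.filter_subset_filter (· ≤ x) hAB)
    omega) (h x (hAB hx))

lemma good_empty : Good ∅ := by simp [Good]

lemma Good.two_mul_card_le {A : Finset ℕ} (h : Good A) {n : ℕ} (hA : A ⊆ range n)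
    (hne : A.Nonempty) : 2 * A.card ≤ n := by
  have hx := A.max'_mem hne
  have h1 : A.filter (· ≤ A.max' hne) = A :=
    Finset.filter_true_of_mem fun a ha => A.le_max' a ha
  have h2 := h _ hx
  rw [h1] at h2
  have : A.max' hne < n := by simpa using hA hx
  omega

/-- Row index set: good subsets of `range n` of size at most `min b (n-b)`. -/
def rowSet (n b : ℕ) : Finset (Finset ℕ) :=
  (range n).powerset.filter fun A => Good A ∧ A.card ≤ b ∧ A.card ≤ n - b

/-- Column index set: subsets of `range n` of size exactly `b`. -/
def colSet (n b : ℕ) : Finset (Finset ℕ) := (range n).powersetCard b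

lemma mem_rowSet {n b A} :
    A ∈ rowSet n b ↔ A ⊆ range n ∧ Good A ∧ A.card ≤ b ∧ A.card ≤ n - b := by
  simp [rowSet]

lemma mem_colSet {n b B} : B ∈ colSet n b ↔ B ⊆ range n ∧ B.card = b := by
  simp [colSet, Finset.mem_powersetCard]

/-- The stacked inclusion matrix. -/
def H (n b : ℕ) : Matrix (rowSet n b) (colSet n b) ℤ :=
  Matrix.of fun A B => if (A : Finset ℕ) ⊆ (B : Finset ℕ) then 1 else 0

/-- A rectangular integer matrix is unimodular if some (equivalently any) bijective
row-reindexing of it is square with unit determinant. -/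
def Uni {R C : Type*} [Fintype C] [DecidableEq C] (M : Matrix R C ℤ) : Prop :=
  ∃ e : C ≃ R, IsUnit (M.submatrix e id).det

lemma uni_of_isUnit_det {C : Type*} [Fintype C] [DecidableEq C] (M : Matrix C C ℤ)
    (h : IsUnit M.det) : Uni M :=
  ⟨Equiv.refl C, by rwa [Equiv.coe_refl, Matrix.submatrix_id_id]⟩

lemma Uni.isUnit_det {R C : Type*} [Fintype C] [DecidableEq C] {M : Matrix R C ℤ}
    (hM : Uni M) (e : C ≃ R) : IsUnit (M.submatrix e id).det := by
  obtain ⟨e', he'⟩ := hM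
  have h1 : M.submatrix e id = (M.submatrix e' id).submatrix (e.trans e'.symm) id := by
    ext c j
    simp
  rw [h1, Matrix.det_permute (e.trans e'.symm) (M.submatrix e' id)]
  exact (IsUnit.mul (by
    rcases Int.units_eq_one_or (Equiv.Perm.sign (e.trans e'.symm)) with h2 | h2 <;>
      simp [h2]) he')

lemma Uni.submatrix {R C R' C' : Type*} [Fintype C] [DecidableEq C]
    [Fintype C'] [DecidableEq C'] {M : Matrix R C ℤ} (hM : Uni M)
    (eR : R' ≃ R) (eC : C' ≃ C) : Uni (M.submatrix eR eC) := by
  obtain ⟨e, he⟩ := hM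
  refine ⟨eC.trans (e.trans eR.symm), ?_⟩
  have h1 : (M.submatrix eR eC).submatrix (eC.trans (e.trans eR.symm)) id
      = (M.submatrix e id).submatrix eC eC := by
    ext c c'
    simp
  rw [h1, Matrix.det_submatrix_equiv_self]
  exact he

lemma Uni.unit_mul {R C : Type*} [Fintype R] [DecidableEq R] [Fintype C] [DecidableEq C]
    {M : Matrix R C ℤ} (hM : Uni M) {U : Matrix R R ℤ} (hU : IsUnit U.det) :
    Uni (U * M) := by
  obtain ⟨e, he⟩ := hM
  refine ⟨e, ?_⟩
  have h1 : (U * M).submatrix e id = (U.submatrix e e) * (M.submatrix e id) := by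
    ext c c'
    simp only [Matrix.submatrix_apply, Matrix.mul_apply, id_eq]
    exact (Equiv.sum_comp e fun r => U (e c) r * M r c').symm
  rw [h1, Matrix.det_mul, Matrix.det_submatrix_equiv_self]
  exact hU.mul he

lemma Uni.fromBlocks {R₁ R₂ C₁ C₂ : Type*} [Fintype C₁] [DecidableEq C₁]
    [Fintype C₂] [DecidableEq C₂] [Fintype R₁] [DecidableEq R₁] [Fintype R₂] [DecidableEq R₂]
    {A : Matrix R₁ C₁ ℤ} {D : Matrix R₂ C₂ ℤ} (hA : Uni A) (hD : Uni D)
    (B : Matrix R₁ C₂ ℤ) : Uni (Matrix.fromBlocks A B 0 D) := by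
  obtain ⟨e₁, he₁⟩ := hA
  obtain ⟨e₂, he₂⟩ := hD
  refine ⟨e₁.sumCongr e₂, ?_⟩
  have h1 : (Matrix.fromBlocks A B 0 D).submatrix (e₁.sumCongr e₂) id
      = Matrix.fromBlocks (A.submatrix e₁ id) (B.submatrix e₁ id) 0 (D.submatrix e₂ id) := by
    ext x y
    rcases x with x | x <;> rcases y with y | y <;> rfl
  rw [h1, Matrix.det_fromBlocks_zero₂₁]
  exact he₁.mul he₂


/-- Split a family of finsets according to membership of `z`. -/
def splitEquiv (z : ℕ) (T S₁ S₂ : Finset (Finset ℕ))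
    (h₁ : ∀ A ∈ S₁, z ∉ A) (h₂ : ∀ A ∈ S₂, z ∉ A)
    (hmem : ∀ A, A ∈ T ↔ (z ∉ A ∧ A ∈ S₁) ∨ (z ∈ A ∧ A.erase z ∈ S₂)) :
    {A // A ∈ T} ≃ ({A // A ∈ S₁} ⊕ {A // A ∈ S₂}) where
  toFun A :=
    if h : z ∈ A.1 then
      Sum.inr ⟨A.1.erase z, by
        rcases (hmem A.1).1 A.2 with ⟨hz, _⟩ | ⟨_, h2⟩
        · exact absurd h hz
        · exact h2⟩
    else
      Sum.inl ⟨A.1, by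
        rcases (hmem A.1).1 A.2 with ⟨_, h1⟩ | ⟨hz, _⟩
        · exact h1
        · exact absurd hz h⟩
  invFun x :=
    match x with
    | Sum.inl A => ⟨A.1, (hmem A.1).2 (Or.inl ⟨h₁ _ A.2, A.2⟩)⟩
    | Sum.inr A' => ⟨insert z A'.1, (hmem _).2 (Or.inr ⟨mem_insert_self _ _, by
        rw [Finset.erase_insert (h₂ _ A'.2)]
        exact A'.2⟩)⟩
  left_inv := by
    rintro ⟨A, hA⟩
    by_cases h : z ∈ A
    · simp only [h, dite_true]
      exact Subtype.ext (Finset.insert_erase h)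
    · simp only [h, dite_false]
  right_inv := by
    rintro (⟨A, hA⟩ | ⟨A', hA'⟩)
    · have hz : z ∉ A := h₁ _ hA
      simp only [hz, dite_false]
    · have hz : z ∈ insert z A' := mem_insert_self _ _
      simp only [hz, dite_true, Sum.inr.injEq]
      exact Subtype.ext (Finset.erase_insert (h₂ _ hA'))

/-- Membership splitting for row sets. -/
lemma rowSet_split {n b : ℕ} (hb : 2 * (b + 1) ≤ n + 1) (A : Finset ℕ) :
    A ∈ rowSet (n+1) (b+1) ↔
      (n ∉ A ∧ A ∈ rowSet n (b+1)) ∨ (n ∈ A ∧ A.erase n ∈ rowSet n b) := by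
  constructor
  · intro hA
    rw [mem_rowSet] at hA
    obtain ⟨hsub, hgood, hcard1, hcard2⟩ := hA
    by_cases h : n ∈ A
    · refine Or.inr ⟨h, ?_⟩
      rw [mem_rowSet]
      have hsub' : A.erase n ⊆ range n := by
        intro x hx
        have hx1 := Finset.mem_of_mem_erase hx
        have hx2 := Finset.ne_of_mem_erase hx
        have := hsub hx1
        simp only [Finset.mem_range] at *
        omega
      have hcard' : (A.erase n).card = A.card - 1 := Finset.card_erase_of_mem h
      have hApos : 1 ≤ A.card := Finset.card_pos.2 ⟨n, h⟩
      refine ⟨hsub', hgood.mono (Finset.erase_subset _ _), by omega, by omega⟩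
    · refine Or.inl ⟨h, ?_⟩
      rw [mem_rowSet]
      have hsub' : A ⊆ range n := by
        intro x hx
        have := hsub hx
        simp only [Finset.mem_range] at *
        have : x ≠ n := fun hxn => h (hxn ▸ hx)
        omega
      refine ⟨hsub', hgood, hcard1, ?_⟩
      -- A.card ≤ n - (b+1)
      by_contra hcon
      push_neg at hcon
      have hup : 2 * A.card ≤ n := by
        rcases Finset.eq_empty_or_nonempty A with rfl | hne
        · simp at hcon
        · exact hgood.two_mul_card_le hsub' hne
      omega
  · rintro (⟨hz, hA⟩ | ⟨hz, hA⟩)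
    · rw [mem_rowSet] at hA ⊢
      obtain ⟨hsub, hgood, hcard1, hcard2⟩ := hA
      exact ⟨hsub.trans (by intro x hx; simp only [Finset.mem_range] at *; omega),
        hgood, hcard1, by omega⟩
    · rw [mem_rowSet] at hA ⊢
      obtain ⟨hsub, hgood, hcard1, hcard2⟩ := hA
      have hins : A = insert n (A.erase n) := (Finset.insert_erase hz).symm
      have hsubA : A ⊆ range (n+1) := by
        intro x hx
        by_cases hxn : x = n
        · simp [hxn]
        · have : x ∈ A.erase n := Finset.mem_erase.2 ⟨hxn, hx⟩
          have := hsub this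
          simp only [Finset.mem_range] at *
          omega
      have hcardA : A.card = (A.erase n).card + 1 := by
        have h1 : (A.erase n).card = A.card - 1 := Finset.card_erase_of_mem hz
        have h2 : 1 ≤ A.card := Finset.card_pos.2 ⟨n, hz⟩
        omega
      refine ⟨hsubA, ?_, by omega, by omega⟩
      -- goodness of A
      intro x hx
      by_cases hxn : x = n
      · subst hxn
        have hfil : A.filter (· ≤ x) = A := Finset.filter_true_of_mem fun a ha => by
          have := hsubA ha
          simp only [Finset.mem_range] at this
          omega
        rw [hfil]
        omega
      · have hxA : x ∈ A.erase n := Finset.mem_erase.2 ⟨hxn, hx⟩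
        have hxlt : x < n := by have := hsub hxA; simpa using this
        have hfil : A.filter (· ≤ x) = (A.erase n).filter (· ≤ x) := by
          ext a
          simp only [Finset.mem_filter, Finset.mem_erase]
          constructor
          · rintro ⟨ha, hax⟩
            exact ⟨⟨by omega, ha⟩, hax⟩
          · rintro ⟨⟨_, ha⟩, hax⟩
            exact ⟨ha, hax⟩
        rw [hfil]
        exact hgood x hxA

/-- Membership splitting for column sets. -/
lemma colSet_split {n b : ℕ} (B : Finset ℕ) :
    B ∈ colSet (n+1) (b+1) ↔
      (n ∉ B ∧ B ∈ colSet n (b+1)) ∨ (n ∈ B ∧ B.erase n ∈ colSet n b) := by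
  rw [mem_colSet]
  constructor
  · rintro ⟨hsub, hcard⟩
    by_cases h : n ∈ B
    · refine Or.inr ⟨h, mem_colSet.2 ⟨?_, ?_⟩⟩
      · intro x hx
        have hx1 := Finset.mem_of_mem_erase hx
        have hx2 := Finset.ne_of_mem_erase hx
        have := hsub hx1
        simp only [Finset.mem_range] at *
        omega
      · simp [Finset.card_erase_of_mem h, hcard]
    · refine Or.inl ⟨h, mem_colSet.2 ⟨?_, hcard⟩⟩
      intro x hx
      have := hsub hx
      have : x ≠ n := fun hxn => h (hxn ▸ hx)
      simp only [Finset.mem_range] at *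
      omega
  · rintro (⟨hz, hB⟩ | ⟨hz, hB⟩)
    · rw [mem_colSet] at hB
      exact ⟨hB.1.trans (by intro x hx; simp only [Finset.mem_range] at *; omega), hB.2⟩
    · rw [mem_colSet] at hB
      obtain ⟨hsub, hcard⟩ := hB
      constructor
      · intro x hx
        by_cases hxn : x = n
        · simp [hxn]
        · have : x ∈ B.erase n := Finset.mem_erase.2 ⟨hxn, hx⟩
          have := hsub this
          simp only [Finset.mem_range] at *
          omega
      · have h1 : (B.erase n).card = B.card - 1 := Finset.card_erase_of_mem hz
        have h2 : 1 ≤ B.card := Finset.card_pos.2 ⟨n, hz⟩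
        omega

lemma not_mem_of_mem_rowSet {n b A} (h : A ∈ rowSet n b) : n ∉ A := fun hz => by
  have := (mem_rowSet.1 h).1 hz
  simp at this

lemma not_mem_of_mem_colSet {n b B} (h : B ∈ colSet n b) : n ∉ B := fun hz => by
  have := (mem_colSet.1 h).1 hz
  simp at this

/-- Row equivalence for the block decomposition. -/
def rowEquiv {n b : ℕ} (hb : 2 * (b + 1) ≤ n + 1) :
    {A // A ∈ rowSet (n+1) (b+1)} ≃ ({A // A ∈ rowSet n (b+1)} ⊕ {A // A ∈ rowSet n b}) :=
  splitEquiv n _ _ _ (fun _ h => not_mem_of_mem_rowSet h) (fun _ h => not_mem_of_mem_rowSet h)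
    (rowSet_split hb)

/-- Column equivalence for the block decomposition. -/
def colEquiv {n b : ℕ} :
    {B // B ∈ colSet (n+1) (b+1)} ≃ ({B // B ∈ colSet n (b+1)} ⊕ {B // B ∈ colSet n b}) :=
  splitEquiv n _ _ _ (fun _ h => not_mem_of_mem_colSet h) (fun _ h => not_mem_of_mem_colSet h)
    colSet_split



/-- The block decomposition of `H`. -/
lemma H_split {n b : ℕ} (hb : 2 * (b + 1) ≤ n + 1) :
    (H (n+1) (b+1)).submatrix (rowEquiv hb).symm (colEquiv (n := n) (b := b)).symm =
      Matrix.fromBlocks (H n (b+1))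
        (Matrix.of fun (A : {A // A ∈ rowSet n (b+1)}) (B : {B // B ∈ colSet n b}) =>
          if (A : Finset ℕ) ⊆ insert n (B : Finset ℕ) then 1 else 0)
        0 (H n b) := by
  ext x y
  rcases x with A | A <;> rcases y with B | B
  · rfl
  · rfl
  · -- insert n A ⊄ B since n ∉ B
    have hnB : n ∉ (B : Finset ℕ) := not_mem_of_mem_colSet B.2
    have : ¬ (insert n (A : Finset ℕ) ⊆ (B : Finset ℕ)) := fun h =>
      hnB (h (mem_insert_self _ _))
    simp only [Matrix.submatrix_apply, Matrix.fromBlocks_apply₂₁]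
    show (if insert n (A : Finset ℕ) ⊆ (B : Finset ℕ) then (1:ℤ) else 0) = 0
    rw [if_neg this]
  · have hnA : n ∉ (A : Finset ℕ) := not_mem_of_mem_rowSet A.2
    simp only [Matrix.submatrix_apply, Matrix.fromBlocks_apply₂₂]
    show (if insert n (A : Finset ℕ) ⊆ insert n (B : Finset ℕ) then (1:ℤ) else 0)
        = if (A : Finset ℕ) ⊆ (B : Finset ℕ) then 1 else 0
    simp only [Finset.insert_subset_insert_iff hnA]

/-- The Möbius (inclusion-exclusion) sign matrix on the row set. -/
def Umat (n b : ℕ) : Matrix {A // A ∈ rowSet n b} {A // A ∈ rowSet n b} ℤ :=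
  Matrix.of fun A A' => if (A' : Finset ℕ) ⊆ (A : Finset ℕ) then (-1) ^ (A' : Finset ℕ).card else 0

lemma isUnit_det_Umat (n b : ℕ) : IsUnit (Umat n b).det := by
  classical
  have htri : (Umat n b).BlockTriangular
      (fun A => OrderDual.toDual (toColex (A : Finset ℕ))) := by
    intro A A' h
    have hlt : toColex (A : Finset ℕ) < toColex (A' : Finset ℕ) := h
    have : ¬ ((A' : Finset ℕ) ⊆ (A : Finset ℕ)) := by
      intro hsub
      exact absurd (Finset.Colex.toColex_le_toColex_of_subset hsub) (not_le.2 hlt)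
    simp [Umat, this]; exact this
  rw [htri.det]
  refine Finset.prod_induction _ IsUnit (fun a b ha hb => ha.mul hb) isUnit_one ?_
  intro a ha
  obtain ⟨A₀, -, hA₀⟩ := Finset.mem_image.1 ha
  have hsub : Subsingleton {A : {A // A ∈ rowSet n b} //
      OrderDual.toDual (toColex (A : Finset ℕ)) = a} := by
    constructor
    rintro ⟨A, hA⟩ ⟨B, hB⟩
    have h3 := OrderDual.toDual.injective (hA.trans hB.symm)
    exact Subtype.ext (Subtype.ext (congrArg ofColex h3))
  rw [Matrix.det_eq_elem_of_subsingleton _ ⟨A₀, hA₀⟩]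
  simp only [Matrix.toSquareBlock_def, Umat, Matrix.of_apply, if_pos (subset_refl _)]
  exact (IsUnit.neg isUnit_one).pow _

/-- Multiplying by the sign matrix turns inclusion into disjointness. -/
lemma Umat_mul_H (n b : ℕ) :
    Umat n b * H n b = Matrix.of fun (A : {A // A ∈ rowSet n b}) (B : {B // B ∈ colSet n b}) =>
      if (A : Finset ℕ) ∩ (B : Finset ℕ) = ∅ then 1 else 0 := by
  ext A B
  simp only [Matrix.mul_apply, Umat, H, Matrix.of_apply]
  have hstep : ∀ A' : {A // A ∈ rowSet n b},
      (if (A' : Finset ℕ) ⊆ (A : Finset ℕ) then ((-1:ℤ)) ^ (A' : Finset ℕ).card else 0) *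
        (if (A' : Finset ℕ) ⊆ (B : Finset ℕ) then (1:ℤ) else 0) =
      if (A' : Finset ℕ) ∈ ((A : Finset ℕ) ∩ (B : Finset ℕ)).powerset
        then (-1:ℤ) ^ (A' : Finset ℕ).card else 0 := by
    intro A'
    have hmem : ((A' : Finset ℕ) ∈ ((A : Finset ℕ) ∩ (B : Finset ℕ)).powerset) ↔
        ((A' : Finset ℕ) ⊆ (A : Finset ℕ) ∧ (A' : Finset ℕ) ⊆ (B : Finset ℕ)) := by
      rw [Finset.mem_powerset, Finset.subset_inter_iff]
    by_cases h1 : (A' : Finset ℕ) ⊆ (A : Finset ℕ) <;>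
      by_cases h2 : (A' : Finset ℕ) ⊆ (B : Finset ℕ)
    · rw [if_pos h1, if_pos h2, if_pos (hmem.2 ⟨h1, h2⟩), mul_one]
    · rw [if_pos h1, if_neg h2, if_neg (fun hc => h2 (hmem.1 hc).2), mul_zero]
    · rw [if_neg h1, if_pos h2, if_neg (fun hc => h1 (hmem.1 hc).1), zero_mul]
    · rw [if_neg h1, if_neg h2, if_neg (fun hc => h1 (hmem.1 hc).1), zero_mul]
  rw [Finset.sum_congr rfl (fun A' _ => hstep A')]
  rw [Finset.sum_coe_sort (rowSet n b)
    (fun S => if S ∈ ((A : Finset ℕ) ∩ (B : Finset ℕ)).powerset then (-1:ℤ) ^ S.card else 0)]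
  rw [← Finset.sum_subset (s₁ := ((A : Finset ℕ) ∩ (B : Finset ℕ)).powerset)
      (by
        intro S hS
        rw [Finset.mem_powerset] at hS
        have hSA : S ⊆ (A : Finset ℕ) := hS.trans (Finset.inter_subset_left)
        have hA := mem_rowSet.1 A.2
        exact mem_rowSet.2 ⟨hSA.trans hA.1, hA.2.1.mono hSA,
          le_trans (Finset.card_le_card hSA) hA.2.2.1,
          le_trans (Finset.card_le_card hSA) hA.2.2.2⟩)
      (by intro S _ hS; rw [if_neg hS])]
  rw [Finset.sum_congr rfl (fun S hS => if_pos hS)]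
  exact Finset.sum_powerset_neg_one_pow_card

/-- Complementation equivalence between column sets. -/
def complEquiv {n b : ℕ} (hb : b ≤ n) :
    {B // B ∈ colSet n b} ≃ {B // B ∈ colSet n (n - b)} where
  toFun B := ⟨range n \ (B : Finset ℕ), by
    have hB := mem_colSet.1 B.2
    exact mem_colSet.2 ⟨Finset.sdiff_subset, by
      rw [Finset.card_sdiff_of_subset hB.1, Finset.card_range, hB.2]⟩⟩
  invFun B := ⟨range n \ (B : Finset ℕ), by
    have hB := mem_colSet.1 B.2
    exact mem_colSet.2 ⟨Finset.sdiff_subset, by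
      rw [Finset.card_sdiff_of_subset hB.1, Finset.card_range, hB.2]
      omega⟩⟩
  left_inv B := Subtype.ext (Finset.sdiff_sdiff_eq_self (mem_colSet.1 B.2).1)
  right_inv B := Subtype.ext (Finset.sdiff_sdiff_eq_self (mem_colSet.1 B.2).1)

/-- Identification of row sets under complementing the size parameter. -/
def rowComplEquiv {n b : ℕ} (hb : b ≤ n) :
    {A // A ∈ rowSet n b} ≃ {A // A ∈ rowSet n (n - b)} :=
  Equiv.subtypeEquivRight fun A => by
    rw [mem_rowSet, mem_rowSet]
    constructor
    · rintro ⟨h1, h2, h3, h4⟩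
      exact ⟨h1, h2, h4, by omega⟩
    · rintro ⟨h1, h2, h3, h4⟩
      exact ⟨h1, h2, by omega, h3⟩

/-- Unimodularity transfers from parameter `n - b` to `b`. -/
lemma uni_H_compl {n b : ℕ} (hb : b ≤ n) (h : Uni (H n (n - b))) : Uni (H n b) := by
  have hU := isUnit_det_Umat n b
  have key : Umat n b * H n b =
      (H n (n - b)).submatrix (rowComplEquiv hb) (complEquiv hb) := by
    rw [Umat_mul_H]
    ext A B
    have hA := mem_rowSet.1 A.2
    simp only [Matrix.of_apply, Matrix.submatrix_apply, H]
    show (if (A : Finset ℕ) ∩ (B : Finset ℕ) = ∅ then (1:ℤ) else 0)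
        = if (A : Finset ℕ) ⊆ range n \ (B : Finset ℕ) then 1 else 0
    by_cases hd : Disjoint (A : Finset ℕ) (B : Finset ℕ)
    · rw [if_pos (Finset.disjoint_iff_inter_eq_empty.1 hd),
        if_pos (Finset.subset_sdiff.2 ⟨hA.1, hd⟩)]
    · rw [if_neg (fun hc => hd (Finset.disjoint_iff_inter_eq_empty.2 hc)),
        if_neg (fun hc => hd (Finset.subset_sdiff.1 hc).2)]
  have h2 : Uni (Umat n b * H n b) := by
    rw [key]
    exact h.submatrix _ _
  have h3 : H n b = (Umat n b)⁻¹ * (Umat n b * H n b) := by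
    rw [← Matrix.mul_assoc, Matrix.nonsing_inv_mul _ hU, Matrix.one_mul]
  rw [h3]
  exact h2.unit_mul (Matrix.isUnit_nonsing_inv_det _ hU)

/-- Base case. -/
lemma uni_H_zero (n : ℕ) : Uni (H n 0) := by
  have hrow : rowSet n 0 = {∅} := by
    ext A
    rw [mem_rowSet]
    simp only [Finset.mem_singleton]
    constructor
    · rintro ⟨-, -, h, -⟩
      exact Finset.card_eq_zero.1 (Nat.le_zero.1 h)
    · rintro rfl
      exact ⟨by simp, good_empty, by simp, by simp⟩
  have hcol : colSet n 0 = {∅} := by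
    ext B
    rw [mem_colSet]
    simp only [Finset.mem_singleton]
    constructor
    · rintro ⟨-, h⟩
      exact Finset.card_eq_zero.1 h
    · rintro rfl
      exact ⟨by simp, by simp⟩
  have : Subsingleton {B // B ∈ colSet n 0} := by
    constructor
    rintro ⟨a, ha⟩ ⟨b, hb⟩
    rw [hcol] at ha hb
    simp only [Finset.mem_singleton] at ha hb
    subst ha; subst hb; rfl
  refine ⟨Equiv.subtypeEquivRight fun A => by rw [hrow, hcol], ?_⟩
  rw [Matrix.det_eq_elem_of_subsingleton _ ⟨∅, by rw [hcol]; simp⟩]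
  simp [H]

/-- Main unimodularity theorem, small parameter. -/
lemma uni_H (n : ℕ) : ∀ b, 2 * b ≤ n → Uni (H n b) := by
  induction n with
  | zero =>
    intro b hb
    have : b = 0 := by omega
    subst this
    exact uni_H_zero 0
  | succ n ih =>
    intro b hb
    cases b with
    | zero => exact uni_H_zero (n+1)
    | succ b =>
      have hA : Uni (H n (b+1)) := by
        by_cases h : 2 * (b + 1) ≤ n
        · exact ih _ h
        · have hn : n = 2 * b + 1 := by omega
          have : n - (b + 1) = b := by omega
          refine uni_H_compl (by omega) ?_
          rw [this]
          exact ih b (by omega)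
      have hD : Uni (H n b) := ih b (by omega)
      have hblocks := (hA.fromBlocks hD
        (Matrix.of fun (A : {A // A ∈ rowSet n (b+1)}) (B : {B // B ∈ colSet n b}) =>
          if (A : Finset ℕ) ⊆ insert n (B : Finset ℕ) then 1 else 0))
      rw [← H_split hb] at hblocks
      have := hblocks.submatrix (rowEquiv hb) (colEquiv (n := n) (b := b))
      simpa using this

/-- Main unimodularity theorem: all parameters `b ≤ n`. -/
lemma uni_H' {n b : ℕ} (hb : b ≤ n) : Uni (H n b) := by
  by_cases h : 2 * b ≤ n
  · exact uni_H n b h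
  · exact uni_H_compl hb (uni_H n (n - b) (by omega))


/-! ### Counting good sets -/

/-- The number of good `i`-subsets of `range n`. -/
def goodCount (n i : ℕ) : ℕ := (((range n).powersetCard i).filter Good).card

lemma mem_goodSet {n i A} : A ∈ ((range n).powersetCard i).filter Good ↔
    A ⊆ range n ∧ A.card = i ∧ Good A := by
  simp [Finset.mem_powersetCard]
  tauto

lemma goodCount_zero (n : ℕ) : goodCount n 0 = 1 := by
  have : ((range n).powersetCard 0).filter Good = {∅} := by
    ext A
    rw [mem_goodSet]
    simp only [Finset.mem_singleton, Finset.card_eq_zero]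
    constructor
    · rintro ⟨-, h, -⟩; exact h
    · rintro rfl; exact ⟨by simp, rfl, good_empty⟩
  rw [goodCount, this, Finset.card_singleton]

lemma goodCount_eq_zero {n i : ℕ} (h : n + 1 ≤ 2 * i) : goodCount n i = 0 := by
  rw [goodCount, Finset.card_eq_zero]
  ext A
  rw [mem_goodSet]
  simp only [Finset.notMem_empty, iff_false]
  rintro ⟨h1, h2, h3⟩
  have hne : A.Nonempty := by
    rw [← Finset.card_pos, h2]; omega
  have := h3.two_mul_card_le h1 hne
  omega

lemma good_insert_iff {n : ℕ} {A' : Finset ℕ} (h : A' ⊆ range n) :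
    Good (insert n A') ↔ Good A' ∧ 2 * (A'.card + 1) ≤ n + 1 := by
  have hnA : n ∉ A' := fun hn => by simpa using h hn
  constructor
  · intro hg
    refine ⟨hg.mono (Finset.subset_insert _ _), ?_⟩
    have h2 := hg n (mem_insert_self _ _)
    have hfil : (insert n A').filter (· ≤ n) = insert n A' :=
      Finset.filter_true_of_mem fun a ha => by
        rcases Finset.mem_insert.1 ha with rfl | ha
        · exact le_refl _
        · exact le_of_lt (by simpa using h ha)
    rw [hfil, Finset.card_insert_of_notMem hnA] at h2
    exact h2
  · rintro ⟨hg, hcard⟩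
    intro x hx
    rcases Finset.mem_insert.1 hx with rfl | hxA
    · have hfil : (insert x A').filter (· ≤ x) = insert x A' :=
        Finset.filter_true_of_mem fun a ha => by
          rcases Finset.mem_insert.1 ha with rfl | ha
          · exact le_refl _
          · exact le_of_lt (by simpa using h ha)
      rw [hfil, Finset.card_insert_of_notMem hnA]
      exact hcard
    · have hxn : x < n := by simpa using h hxA
      have hfil : (insert n A').filter (· ≤ x) = A'.filter (· ≤ x) := by
        ext a
        simp only [Finset.mem_filter, Finset.mem_insert]
        constructor
        · rintro ⟨rfl | ha, hax⟩
          · omega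
          · exact ⟨ha, hax⟩
        · rintro ⟨ha, hax⟩
          exact ⟨Or.inr ha, hax⟩
      rw [hfil]
      exact hg x hxA

lemma goodSet_split {n i : ℕ} (h : 2 * (i + 1) ≤ n + 1) (A : Finset ℕ) :
    A ∈ ((range (n+1)).powersetCard (i+1)).filter Good ↔
      (n ∉ A ∧ A ∈ ((range n).powersetCard (i+1)).filter Good) ∨
      (n ∈ A ∧ A.erase n ∈ ((range n).powersetCard i).filter Good) := by
  constructor
  · intro hA
    obtain ⟨hsub, hcard, hgood⟩ := mem_goodSet.1 hA
    by_cases hz : n ∈ A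
    · refine Or.inr ⟨hz, mem_goodSet.2 ⟨?_, ?_, hgood.mono (Finset.erase_subset _ _)⟩⟩
      · intro x hx
        have hx1 := Finset.mem_of_mem_erase hx
        have hx2 := Finset.ne_of_mem_erase hx
        have := hsub hx1
        simp only [Finset.mem_range] at *
        omega
      · rw [Finset.card_erase_of_mem hz, hcard]
        omega
    · refine Or.inl ⟨hz, mem_goodSet.2 ⟨?_, hcard, hgood⟩⟩
      intro x hx
      have := hsub hx
      have : x ≠ n := fun hxn => hz (hxn ▸ hx)
      simp only [Finset.mem_range] at *
      omega
  · rintro (⟨hz, hA⟩ | ⟨hz, hA⟩)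
    · obtain ⟨hsub, hcard, hgood⟩ := mem_goodSet.1 hA
      exact mem_goodSet.2 ⟨hsub.trans (by intro x hx; simp only [Finset.mem_range] at *; omega),
        hcard, hgood⟩
    · obtain ⟨hsub, hcard, hgood⟩ := mem_goodSet.1 hA
      have hins : insert n (A.erase n) = A := Finset.insert_erase hz
      have hgood' : Good A := by
        rw [← hins]
        exact (good_insert_iff hsub).2 ⟨hgood, by rw [hcard]; exact h⟩
      refine mem_goodSet.2 ⟨?_, ?_, hgood'⟩
      · intro x hx
        by_cases hxn : x = n
        · simp [hxn]
        · have : x ∈ A.erase n := Finset.mem_erase.2 ⟨hxn, hx⟩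
          have := hsub this
          simp only [Finset.mem_range] at *
          omega
      · have h1 : (A.erase n).card = A.card - 1 := Finset.card_erase_of_mem hz
        have h2 : 1 ≤ A.card := Finset.card_pos.2 ⟨n, hz⟩
        omega

lemma goodCount_succ_le {n i : ℕ} (h : 2 * (i + 1) ≤ n + 1) :
    goodCount (n+1) (i+1) = goodCount n (i+1) + goodCount n i := by
  have e := splitEquiv n (((range (n+1)).powersetCard (i+1)).filter Good)
    (((range n).powersetCard (i+1)).filter Good)
    (((range n).powersetCard i).filter Good)
    (fun A hA => fun hn => by simpa using (mem_goodSet.1 hA).1 hn)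
    (fun A hA => fun hn => by simpa using (mem_goodSet.1 hA).1 hn)
    (goodSet_split h)
  have h1 := Fintype.card_congr e
  rw [Fintype.card_coe, Fintype.card_sum, Fintype.card_coe, Fintype.card_coe] at h1
  exact h1

lemma goodCount_succ_gt {n i : ℕ} (h : ¬ 2 * (i + 1) ≤ n + 1) :
    goodCount (n+1) (i+1) = goodCount n (i+1) := by
  rw [goodCount, goodCount]
  congr 1
  ext A
  rw [mem_goodSet, mem_goodSet]
  constructor
  · rintro ⟨hsub, hcard, hgood⟩
    have hz : n ∉ A := by
      intro hz
      have hfil : A.filter (· ≤ n) = A := Finset.filter_true_of_mem fun a ha => by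
        have := hsub ha
        simp only [Finset.mem_range] at this
        omega
      have := hgood n hz
      rw [hfil, hcard] at this
      omega
    refine ⟨?_, hcard, hgood⟩
    intro x hx
    have := hsub hx
    have : x ≠ n := fun hxn => hz (hxn ▸ hx)
    simp only [Finset.mem_range] at *
    omega
  · rintro ⟨hsub, hcard, hgood⟩
    exact ⟨hsub.trans (by intro x hx; simp only [Finset.mem_range] at *; omega), hcard, hgood⟩

lemma choose_le_choose_succ {n i : ℕ} (h : 2 * i + 1 ≤ n) :
    n.choose i ≤ n.choose (i+1) := by
  by_cases h2 : 2 * (i + 1) ≤ n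
  · exact Nat.choose_le_succ_of_lt_half_left (by omega)
  · have hn : n = 2 * i + 1 := by omega
    subst hn
    have hs := Nat.choose_symm (n := 2*i+1) (k := i+1) (by omega)
    have h3 : 2*i+1 - (i+1) = i := by omega
    rw [h3] at hs
    omega

/-- The count of good `i`-subsets of an `n`-set. -/
lemma goodCount_eq {n i : ℕ} (h1 : 1 ≤ i) (h2 : 2 * i ≤ n + 1) :
    goodCount n i = n.choose i - n.choose (i-1) := by
  induction n generalizing i with
  | zero => omega
  | succ n ih =>
    obtain ⟨i, rfl⟩ : ∃ j, i = j + 1 := ⟨i - 1, by omega⟩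
    simp only [Nat.add_sub_cancel]
    have hp1 : (n+1).choose (i+1) = n.choose i + n.choose (i+1) := Nat.choose_succ_succ' n i
    by_cases h : 2 * (i + 1) ≤ n + 1
    · rw [goodCount_succ_le h]
      have hsub1 : goodCount n (i+1) = n.choose (i+1) - n.choose i := by
        have := ih (i := i + 1) (by omega) (by omega)
        simpa using this
      have hmono1 : n.choose i ≤ n.choose (i+1) := choose_le_choose_succ (by omega)
      rcases Nat.eq_zero_or_pos i with rfl | hi
      · have hz := goodCount_zero n
        simp only [Nat.choose_zero_right, Nat.choose_one_right] at *
        omega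
      · have hsub2 : goodCount n i = n.choose i - n.choose (i-1) := ih hi (by omega)
        obtain ⟨j, rfl⟩ : ∃ j, i = j + 1 := ⟨i - 1, by omega⟩
        have hp2 : (n+1).choose (j+1) = n.choose j + n.choose (j+1) := Nat.choose_succ_succ' n j
        have hmono2 : n.choose j ≤ n.choose (j+1) := choose_le_choose_succ (by omega)
        simp only [Nat.add_sub_cancel] at hsub2 ⊢
        omega
    · have hn : n = 2 * i := by omega
      rw [goodCount_succ_gt h, goodCount_eq_zero (by omega)]
      have hsymm := Nat.choose_symm (n := n+1) (k := i+1) (by omega)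
      have h3 : n + 1 - (i+1) = i := by omega
      rw [h3] at hsymm
      omega


/-! ### Transfer to `Fin n` and final assembly -/

/-- Equivalence between `a`-subsets of `Fin n` and the column index set. -/
def finColEquiv (n a : ℕ) : {s : Finset (Fin n) // s.card = a} ≃ {B // B ∈ colSet n a} where
  toFun s := ⟨s.1.map Fin.valEmbedding, mem_colSet.2 ⟨by
      intro x hx
      obtain ⟨y, hy, rfl⟩ := Finset.mem_map.1 hx
      simpa using y.2, by rw [Finset.card_map]; exact s.2⟩⟩
  invFun B := ⟨(B : Finset ℕ).attachFin (fun m hm => by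
      have := (mem_colSet.1 B.2).1 hm
      simpa using this), by
      rw [Finset.card_attachFin]; exact (mem_colSet.1 B.2).2⟩
  left_inv s := Subtype.ext (by
    ext x
    rw [Finset.mem_attachFin]
    constructor
    · intro hx
      obtain ⟨y, hy, hyx⟩ := Finset.mem_map.1 hx
      have : y = x := Fin.val_injective (by simpa using hyx)
      exact this ▸ hy
    · intro hx
      exact Finset.mem_map.2 ⟨x, hx, rfl⟩)
  right_inv B := Subtype.ext (by
    ext m
    constructor
    · intro hm
      obtain ⟨y, hy, rfl⟩ := Finset.mem_map.1 hm
      exact (Finset.mem_attachFin _).1 hy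
    · intro hm
      have hlt : m < n := by simpa using (mem_colSet.1 B.2).1 hm
      exact Finset.mem_map.2 ⟨⟨m, hlt⟩, (Finset.mem_attachFin _).2 hm, rfl⟩)

/-- The key counting identity: summing the inclusion matrix over middle layers. -/
lemma key_sum {n t k : ℕ} (htk : t ≤ k) (A : {A // A ∈ rowSet n t})
    (B : {B // B ∈ colSet n k}) :
    ∑ T : {T // T ∈ colSet n t}, (H n t) A T *
      (if (T : Finset ℕ) ⊆ (B : Finset ℕ) then (1:ℤ) else 0) =
    if (A : Finset ℕ) ⊆ (B : Finset ℕ)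
      then ((k - (A : Finset ℕ).card).choose (t - (A : Finset ℕ).card) : ℤ) else 0 := by
  classical
  obtain ⟨hAsub, hAgood, hAcard, -⟩ := mem_rowSet.1 A.2
  obtain ⟨hBsub, hBcard⟩ := mem_colSet.1 B.2
  have hterm : ∀ T : {T // T ∈ colSet n t}, (H n t) A T *
      (if (T : Finset ℕ) ⊆ (B : Finset ℕ) then (1:ℤ) else 0) =
      if ((A : Finset ℕ) ⊆ (T : Finset ℕ) ∧ (T : Finset ℕ) ⊆ (B : Finset ℕ)) then 1 else 0 := by
    intro T
    by_cases h1 : (A : Finset ℕ) ⊆ (T : Finset ℕ) <;>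
      by_cases h2 : (T : Finset ℕ) ⊆ (B : Finset ℕ) <;>
      simp [H, h1, h2]
  rw [Finset.sum_congr rfl fun T _ => hterm T]
  rw [Finset.sum_coe_sort (colSet n t)
    (fun T => if ((A : Finset ℕ) ⊆ T ∧ T ⊆ (B : Finset ℕ)) then (1:ℤ) else 0)]
  rw [Finset.sum_boole]
  by_cases hAB : (A : Finset ℕ) ⊆ (B : Finset ℕ)
  · rw [if_pos hAB]
    have hcards : ((colSet n t).filter
        (fun T => (A : Finset ℕ) ⊆ T ∧ T ⊆ (B : Finset ℕ))).card =
        (((B : Finset ℕ) \ (A : Finset ℕ)).powersetCard (t - (A : Finset ℕ).card)).card := by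
      apply Finset.card_bij' (fun T _ => T \ (A : Finset ℕ)) (fun S _ => S ∪ (A : Finset ℕ))
      · intro T hT
        have hTmem := (Finset.mem_filter.1 hT).1
        have hAT := (Finset.mem_filter.1 hT).2.1
        have hTB := (Finset.mem_filter.1 hT).2.2
        rw [Finset.mem_powersetCard]
        refine ⟨Finset.sdiff_subset_sdiff hTB (le_refl _), ?_⟩
        rw [Finset.card_sdiff_of_subset hAT, (mem_colSet.1 hTmem).2]
      · intro S hS
        rw [Finset.mem_powersetCard] at hS
        obtain ⟨hSsub, hScard⟩ := hS
        have hdisj : Disjoint S (A : Finset ℕ) :=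
          Finset.disjoint_of_subset_left hSsub (Finset.sdiff_disjoint)
        rw [Finset.mem_filter]
        refine ⟨mem_colSet.2 ⟨?_, ?_⟩, Finset.subset_union_right, ?_⟩
        · exact Finset.union_subset ((hSsub.trans Finset.sdiff_subset).trans hBsub) hAsub
        · rw [Finset.card_union_of_disjoint hdisj, hScard]
          have : (A : Finset ℕ).card ≤ k := le_trans hAcard htk
          omega
        · exact Finset.union_subset (hSsub.trans Finset.sdiff_subset) hAB
      · intro T hT
        have hAT : (A : Finset ℕ) ⊆ T := (Finset.mem_filter.1 hT).2.1
        exact Finset.sdiff_union_of_subset hAT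
      · intro S hS
        rw [Finset.mem_powersetCard] at hS
        have hdisj : Disjoint S (A : Finset ℕ) :=
          Finset.disjoint_of_subset_left hS.1 (Finset.sdiff_disjoint)
        exact Finset.union_sdiff_cancel_right hdisj
    rw [hcards, Finset.card_powersetCard, Finset.card_sdiff_of_subset hAB, hBcard]
  · rw [if_neg hAB]
    have : (colSet n t).filter (fun T => (A : Finset ℕ) ⊆ T ∧ T ⊆ (B : Finset ℕ)) = ∅ := by
      apply Finset.filter_eq_empty_iff.2
      intro T _ hc
      exact hAB (hc.1.trans hc.2)
    rw [this, Finset.card_empty]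
    exact Nat.cast_zero

/-- The multiset of diagonal entries. -/
lemma diag_multiset {n t k : ℕ} (htk : t ≤ k) (hkn : t + k ≤ n) :
    ((Finset.univ : Finset {A // A ∈ rowSet n t}).val.map
      (fun A : {A // A ∈ rowSet n t} =>
        ((k - (A : Finset ℕ).card).choose (t - (A : Finset ℕ).card) : ℤ))) =
    (Finset.range (t + 1)).val.bind fun i =>
      Multiset.replicate (if i = 0 then 1 else Nat.choose n i - Nat.choose n (i - 1))
        ((Nat.choose (k - i) (t - i) : ℤ)) := by
  classical
  have hdisj : ((Finset.range (t+1)) : Set ℕ).PairwiseDisjoint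
      (fun i => (Finset.univ : Finset {A // A ∈ rowSet n t}).filter
        (fun A : {A // A ∈ rowSet n t} => (A : Finset ℕ).card = i)) := by
    intro i _ j _ hij
    simp only [Function.onFun]
    rw [Finset.disjoint_left]
    intro A hAi hAj
    have h1 := (Finset.mem_filter.1 hAi).2
    have h2 := (Finset.mem_filter.1 hAj).2
    exact hij (by rw [← h1, h2])
  have huniv : (Finset.univ : Finset {A // A ∈ rowSet n t}) =
      (Finset.range (t+1)).disjiUnion
        (fun i => (Finset.univ : Finset {A // A ∈ rowSet n t}).filter
          (fun A : {A // A ∈ rowSet n t} => (A : Finset ℕ).card = i)) hdisj := by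
    apply Finset.ext
    intro A
    constructor
    · intro _
      refine Finset.mem_disjiUnion.2 ⟨(A : Finset ℕ).card, Finset.mem_range.2 ?_,
        Finset.mem_filter.2 ⟨Finset.mem_univ _, rfl⟩⟩
      have := (mem_rowSet.1 A.2).2.2.1
      omega
    · intro _
      exact Finset.mem_univ _
  rw [huniv, Finset.disjiUnion_val, Multiset.map_bind]
  apply Multiset.bind_congr
  intro i hi
  have hit : i ≤ t := by
    have := Multiset.mem_range.1 hi
    omega
  apply Multiset.eq_replicate.2
  constructor
  · rw [Multiset.card_map, ← Finset.card_def]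
    have hcard : ((Finset.univ : Finset {A // A ∈ rowSet n t}).filter
        (fun A : {A // A ∈ rowSet n t} => (A : Finset ℕ).card = i)).card =
        (((range n).powersetCard i).filter Good).card := by
      rw [Finset.univ_eq_attach,
        Finset.filter_attach (fun x : Finset ℕ => x.card = i) (rowSet n t),
        Finset.card_map, Finset.card_attach]
      congr 1
      ext A
      rw [Finset.mem_filter, mem_rowSet, mem_goodSet]
      constructor
      · rintro ⟨⟨h1, h2, -, -⟩, h5⟩
        exact ⟨h1, h5, h2⟩
      · rintro ⟨h1, h2, h3⟩
        exact ⟨⟨h1, h3, by omega, by omega⟩, h2⟩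
    rw [hcard]
    rcases Nat.eq_zero_or_pos i with rfl | hipos
    · rw [if_pos rfl]
      exact goodCount_zero n
    · rw [if_neg (by omega)]
      exact goodCount_eq hipos (by omega)
  · intro b hb
    obtain ⟨A, hA, rfl⟩ := Multiset.mem_map.1 hb
    have hAi : (A : Finset ℕ).card = i :=
      (Finset.mem_filter.1 (Finset.mem_def.2 hA)).2
    rw [hAi]

end Wilson

/-- The inclusion matrix `W_{t,k}` of `t`-subsets versus `k`-subsets of an
`n`-set. -/
def inclMatrix (n a b : ℕ) :
    Matrix {s : Finset (Fin n) // s.card = a} {s : Finset (Fin n) // s.card = b} ℤ :=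
  Matrix.of fun A B => if (A : Finset (Fin n)) ⊆ (B : Finset (Fin n)) then 1 else 0

/-- Wilson: for `t ≤ k`, `t + k ≤ n`, the inclusion matrix
`W_{t,k}` has a diagonal form over `ℤ` with diagonal entries `C(k-i, t-i)`,
each with multiplicity `C(n,i) - C(n,i-1)`, for `0 ≤ i ≤ t`. -/
theorem wilson_diagonal_form (n t k : ℕ) (htk : t ≤ k) (hkn : t + k ≤ n) :
    ∃ (P : Matrix {s : Finset (Fin n) // s.card = t}
          {s : Finset (Fin n) // s.card = t} ℤ)
      (Q : Matrix {s : Finset (Fin n) // s.card = k}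
          {s : Finset (Fin n) // s.card = k} ℤ)
      (σ : {s : Finset (Fin n) // s.card = t} ↪ {s : Finset (Fin n) // s.card = k})
      (d : {s : Finset (Fin n) // s.card = t} → ℤ),
      IsUnit P.det ∧ IsUnit Q.det ∧
      P * inclMatrix n t k * Q = Matrix.of (fun A B => if B = σ A then d A else 0) ∧
      Finset.univ.val.map d =
        (Finset.range (t + 1)).val.bind fun i =>
          Multiset.replicate
            (if i = 0 then 1 else Nat.choose n i - Nat.choose n (i - 1))
            ((Nat.choose (k - i) (t - i) : ℤ)) := by
  classical
  obtain ⟨et, het⟩ := Wilson.uni_H' (n := n) (b := t) (by omega)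
  obtain ⟨ek, hek⟩ := Wilson.uni_H' (n := n) (b := k) (by omega)
  set γt := Wilson.finColEquiv n t with hγt
  set γk := Wilson.finColEquiv n k with hγk
  -- the inclusion of the small row set into the large row set
  have hι : ∀ A : {A // A ∈ Wilson.rowSet n t}, (A : Finset ℕ) ∈ Wilson.rowSet n k := by
    intro A
    obtain ⟨h1, h2, h3, h4⟩ := Wilson.mem_rowSet.1 A.2
    exact Wilson.mem_rowSet.2 ⟨h1, h2, by omega, by omega⟩
  set ι : {A // A ∈ Wilson.rowSet n t} → {A // A ∈ Wilson.rowSet n k} :=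
    fun A => ⟨(A : Finset ℕ), hι A⟩ with hιdef
  set W' : Matrix {T // T ∈ Wilson.colSet n t} {B // B ∈ Wilson.colSet n k} ℤ :=
    Matrix.of fun T B => if (T : Finset ℕ) ⊆ (B : Finset ℕ) then 1 else 0 with hW'
  set Ht : Matrix {T // T ∈ Wilson.colSet n t} {T // T ∈ Wilson.colSet n t} ℤ :=
    (Wilson.H n t).submatrix et id with hHt
  set M' : Matrix {B // B ∈ Wilson.colSet n k} {B // B ∈ Wilson.colSet n k} ℤ :=
    (Wilson.H n k).submatrix ek id with hM'
  refine ⟨Ht.submatrix γt γt, (M'⁻¹).submatrix γk γk,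
    ⟨fun X => γk.symm (ek.symm (ι (et (γt X)))), ?_⟩,
    fun X => ((k - ((et (γt X)) : Finset ℕ).card).choose
      (t - ((et (γt X)) : Finset ℕ).card) : ℤ), ?_, ?_, ?_, ?_⟩
  · -- injectivity of σ
    intro a b hab
    have h1 := ek.symm.injective (γk.symm.injective hab)
    have h0 := congrArg Subtype.val h1
    have h2 : et (γt a) = et (γt b) := Subtype.ext h0
    exact γt.injective (et.injective h2)
  · rw [Matrix.det_submatrix_equiv_self]
    exact het
  · rw [Matrix.det_submatrix_equiv_self]
    exact Matrix.isUnit_nonsing_inv_det M' hek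
  · -- the diagonal form identity
    have hincl : inclMatrix n t k = W'.submatrix γt γk := by
      ext s u
      show (if (s : Finset (Fin n)) ⊆ (u : Finset (Fin n)) then (1:ℤ) else 0) =
        if ((γt s : {T // T ∈ Wilson.colSet n t}) : Finset ℕ)
            ⊆ ((γk u : {B // B ∈ Wilson.colSet n k}) : Finset ℕ) then 1 else 0
      have hco : (((γt s : {T // T ∈ Wilson.colSet n t}) : Finset ℕ)
            ⊆ ((γk u : {B // B ∈ Wilson.colSet n k}) : Finset ℕ)) ↔
          ((s : Finset (Fin n)) ⊆ (u : Finset (Fin n))) := by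
        show ((s : Finset (Fin n)).map Fin.valEmbedding ⊆
          (u : Finset (Fin n)).map Fin.valEmbedding) ↔ _
        exact Finset.map_subset_map
      by_cases h : (s : Finset (Fin n)) ⊆ (u : Finset (Fin n))
      · rw [if_pos h, if_pos (hco.2 h)]
      · rw [if_neg h, if_neg (fun hc => h (hco.1 hc))]
    have hmid : Ht * W' = Matrix.of fun (x : {T // T ∈ Wilson.colSet n t})
        (B : {B // B ∈ Wilson.colSet n k}) =>
        ((k - ((et x : {A // A ∈ Wilson.rowSet n t}) : Finset ℕ).card).choose
          (t - ((et x) : Finset ℕ).card) : ℤ) *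
          (Wilson.H n k) (ι (et x)) B := by
      ext x B
      rw [Matrix.mul_apply]
      have h1 : ∀ T, Ht x T * W' T B = (Wilson.H n t) (et x) T *
          (if (T : Finset ℕ) ⊆ (B : Finset ℕ) then (1:ℤ) else 0) := fun T => rfl
      rw [Finset.sum_congr rfl fun T _ => h1 T, Wilson.key_sum htk (et x) B]
      show _ = _ * (if ((ι (et x) : {A // A ∈ Wilson.rowSet n k}) : Finset ℕ)
          ⊆ (B : Finset ℕ) then (1:ℤ) else 0)
      have h2 : ((ι (et x) : {A // A ∈ Wilson.rowSet n k}) : Finset ℕ) =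
          ((et x) : Finset ℕ) := rfl
      rw [h2]
      by_cases h : ((et x) : Finset ℕ) ⊆ (B : Finset ℕ)
      · rw [if_pos h, if_pos h, mul_one]
      · rw [if_neg h, if_neg h, mul_zero]
    have hfin : Ht * W' * M'⁻¹ = Matrix.of
        fun (x : {T // T ∈ Wilson.colSet n t}) (y : {B // B ∈ Wilson.colSet n k}) =>
        if y = ek.symm (ι (et x)) then
          ((k - ((et x) : Finset ℕ).card).choose (t - ((et x) : Finset ℕ).card) : ℤ)
        else 0 := by
      rw [hmid]
      ext x y
      rw [Matrix.mul_apply]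
      have h3 : ∀ B, (Wilson.H n k) (ι (et x)) B = M' (ek.symm (ι (et x))) B := by
        intro B
        show _ = (Wilson.H n k) (ek (ek.symm (ι (et x)))) B
        rw [Equiv.apply_symm_apply]
      have h4 : ∀ B : {B // B ∈ Wilson.colSet n k},
          (Matrix.of fun x B =>
            ((k - ((et x) : Finset ℕ).card).choose (t - ((et x) : Finset ℕ).card) : ℤ) *
            (Wilson.H n k) (ι (et x)) B) x B * (M'⁻¹) B y =
          ((k - ((et x) : Finset ℕ).card).choose (t - ((et x) : Finset ℕ).card) : ℤ) *
            (M' (ek.symm (ι (et x))) B * (M'⁻¹) B y) := by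
        intro B
        show (_ * (Wilson.H n k) (ι (et x)) B) * (M'⁻¹) B y = _
        rw [h3 B, mul_assoc]
      rw [Finset.sum_congr rfl fun B _ => h4 B, ← Finset.mul_sum]
      rw [show ∑ B, M' (ek.symm (ι (et x))) B * (M'⁻¹) B y
          = (M' * M'⁻¹) (ek.symm (ι (et x))) y from (Matrix.mul_apply).symm]
      rw [Matrix.mul_nonsing_inv M' hek, Matrix.one_apply]
      simp only [Matrix.of_apply]
      by_cases h : ek.symm (ι (et x)) = y
      · rw [if_pos h, if_pos h.symm, mul_one]
      · rw [if_neg h, if_neg (fun hc => h hc.symm), mul_zero]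
    rw [hincl]
    rw [Matrix.submatrix_mul_equiv Ht W' ⇑γt γt ⇑γk,
      Matrix.submatrix_mul_equiv (Ht * W') M'⁻¹ ⇑γt γk ⇑γk, hfin]
    ext X Y
    simp only [Matrix.submatrix_apply, Matrix.of_apply, id_eq, Function.Embedding.coeFn_mk]
    by_cases h : Y = γk.symm (ek.symm (ι (et (γt X))))
    · rw [if_pos ((Equiv.eq_symm_apply γk).1 h)]; exact (if_pos h).symm
    · rw [if_neg (fun hc => h ((Equiv.eq_symm_apply γk).2 hc))]; exact (if_neg h).symm
  · -- multiset of diagonal entries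
    have h1 : (Finset.univ : Finset {A // A ∈ Wilson.rowSet n t}) =
        (Finset.univ : Finset {s : Finset (Fin n) // s.card = t}).map
          (γt.trans et).toEmbedding := (Finset.map_univ_equiv _).symm
    rw [show (fun X : {s : Finset (Fin n) // s.card = t} =>
        ((k - ((et (γt X)) : Finset ℕ).card).choose
          (t - ((et (γt X)) : Finset ℕ).card) : ℤ)) =
      (fun A : {A // A ∈ Wilson.rowSet n t} =>
        ((k - (A : Finset ℕ).card).choose (t - (A : Finset ℕ).card) : ℤ))
        ∘ (γt.trans et) from rfl]
    rw [← Multiset.map_map, show Multiset.map (⇑(γt.trans et)) (Finset.univ.val) =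
        (Finset.univ : Finset {A // A ∈ Wilson.rowSet n t}).val from ?_]
    · exact Wilson.diag_multiset htk hkn
    · rw [h1, Finset.map_val]
      rfl
end

section
/- For i ≤ j and j ≤ n - t, the subset incidence matrices satisfy W_{i,j} \bar{W}_{j,t} = binom(n-t-i, j-i) \bar{W}_{i,t}, where \bar{W}_{a,b} is the disjointness matrix of a-subsets versus b-subsets (entry 1 iff the subsets are disjoint). -/
/-- The disjointness matrix `W̄_{a,b}` of `a`-subsets versus `b`-subsets of an
`n`-set. -/
def disjMatrix (n a b : ℕ) :
    Matrix {s : Finset (Fin n) // s.card = a} {s : Finset (Fin n) // s.card = b} ℤ :=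
  Matrix.of fun A B => if Disjoint (A : Finset (Fin n)) (B : Finset (Fin n)) then 1 else 0

lemma count_aux (n i j t : ℕ) (hij : i ≤ j) (A C : Finset (Fin n))
    (hA : A.card = i) (hC : C.card = t) (hAC : Disjoint A C) :
    (Finset.univ.filter fun B : {s : Finset (Fin n) // s.card = j} =>
        A ⊆ B.1 ∧ Disjoint B.1 C).card = (n - t - i).choose (j - i) := by
  classical
  have hsub : A ⊆ Cᶜ := by
    intro x hx
    simp only [Finset.mem_compl]
    exact fun h => Finset.disjoint_left.mp hAC hx h
  rw [show (n - t - i).choose (j - i) = ((Cᶜ \ A).powersetCard (j - i)).card by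
    rw [Finset.card_powersetCard, Finset.card_sdiff_of_subset hsub, Finset.card_compl, hA, hC,
      Fintype.card_fin]]
  refine Finset.card_bij' (fun B _ => B.1 \ A)
    (fun D hD => ⟨D ∪ A, ?_⟩) ?_ ?_ ?_ ?_
  · obtain ⟨hD1, hD2⟩ := Finset.mem_powersetCard.mp hD
    have hdisj : Disjoint D A :=
      Finset.disjoint_of_subset_left hD1 Finset.sdiff_disjoint
    rw [Finset.card_union_of_disjoint hdisj, hD2, hA, Nat.sub_add_cancel hij]
  · intro B hB
    obtain ⟨hAB, hBC⟩ := (Finset.mem_filter.mp hB).2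
    refine Finset.mem_powersetCard.mpr ⟨?_, ?_⟩
    · intro x hx
      obtain ⟨hx1, hx2⟩ := Finset.mem_sdiff.mp hx
      exact Finset.mem_sdiff.mpr ⟨Finset.mem_compl.mpr
        (fun h => Finset.disjoint_left.mp hBC hx1 h), hx2⟩
    · rw [Finset.card_sdiff_of_subset hAB, B.2, hA]
  · intro D hD
    obtain ⟨hD1, _⟩ := Finset.mem_powersetCard.mp hD
    refine Finset.mem_filter.mpr ⟨Finset.mem_univ _, Finset.subset_union_right, ?_⟩
    refine Finset.disjoint_union_left.mpr ⟨?_, hAC⟩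
    exact Finset.disjoint_left.mpr fun x hx h =>
      Finset.mem_compl.mp (Finset.mem_sdiff.mp (hD1 hx)).1 h
  · intro B hB
    obtain ⟨hAB, _⟩ := (Finset.mem_filter.mp hB).2
    exact Subtype.ext (Finset.sdiff_union_of_subset hAB)
  · intro D hD
    obtain ⟨hD1, _⟩ := Finset.mem_powersetCard.mp hD
    have hdisj : Disjoint D A :=
      Finset.disjoint_of_subset_left hD1 Finset.sdiff_disjoint
    simp [Finset.union_sdiff_cancel_right hdisj]

/-- for `i ≤ j` and `j ≤ n - t`,
`W_{i,j} W̄_{j,t} = C(n-t-i, j-i) W̄_{i,t}`. -/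
theorem inclMatrix_mul_disjMatrix (n i j t : ℕ)
    (hij : i ≤ j) (hjnt : j ≤ n - t) :
    inclMatrix n i j * disjMatrix n j t =
      ((n - t - i).choose (j - i) : ℤ) • disjMatrix n i t := by
  classical
  ext A C
  simp only [Matrix.mul_apply, inclMatrix, disjMatrix, Matrix.of_apply,
    Matrix.smul_apply, smul_eq_mul, ite_mul, one_mul, zero_mul, mul_ite, mul_one, mul_zero]
  by_cases hAC : Disjoint (A : Finset (Fin n)) (C : Finset (Fin n))
  · rw [if_pos hAC]
    have key := count_aux n i j t hij A C A.2 C.2 hAC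
    calc (∑ x : {s : Finset (Fin n) // s.card = j},
            if Disjoint (x : Finset (Fin n)) (C : Finset (Fin n)) then
              if (A : Finset (Fin n)) ⊆ (x : Finset (Fin n)) then (1 : ℤ) else 0 else 0)
        = ∑ x : {s : Finset (Fin n) // s.card = j},
            if (A : Finset (Fin n)) ⊆ (x : Finset (Fin n)) ∧
              Disjoint (x : Finset (Fin n)) (C : Finset (Fin n)) then (1 : ℤ) else 0 := by
          refine Finset.sum_congr rfl fun x _ => ?_
          by_cases h1 : (A : Finset (Fin n)) ⊆ (x : Finset (Fin n)) <;>
            by_cases h2 : Disjoint (x : Finset (Fin n)) (C : Finset (Fin n)) <;>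
            simp [h1, h2]
      _ = ((Finset.univ.filter fun B : {s : Finset (Fin n) // s.card = j} =>
            (A : Finset (Fin n)) ⊆ B.1 ∧ Disjoint B.1 (C : Finset (Fin n))).card : ℤ) := by
          rw [Finset.sum_boole]
      _ = ((n - t - i).choose (j - i) : ℤ) := by rw [key]
  · rw [if_neg hAC]
    refine Finset.sum_eq_zero fun x _ => ?_
    by_cases h2 : Disjoint (x : Finset (Fin n)) (C : Finset (Fin n))
    · rw [if_pos h2, if_neg]
      intro h1
      exact hAC (Finset.disjoint_of_subset_left h1 h2)
    · rw [if_neg h2]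
end

section
/- For t ≤ k with t + k ≤ n, the inclusion and disjointness matrices on subsets of an n-set satisfy W_{t,k} = Σ_{i=0}^{t} (-1)^i W_{i,t}^T \bar{W}_{i,k} and \bar{W}_{t,k} = Σ_{i=0}^{t} (-1)^i W_{i,t}^T W_{i,k}. -/
open Matrix

lemma count_subsets (n i : ℕ) (U : Finset (Fin n)) :
    ∑ S : {s : Finset (Fin n) // s.card = i},
      (if (S : Finset (Fin n)) ⊆ U then (1 : ℤ) else 0) = (U.card.choose i : ℤ) := by
  classical
  rw [Finset.sum_boole]
  norm_cast
  rw [← Finset.card_powersetCard i U]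
  refine Finset.card_bij (fun S _ => (S : Finset (Fin n))) ?_ ?_ ?_
  · intro S hS
    simp only [Finset.mem_filter, Finset.mem_univ, true_and] at hS
    exact Finset.mem_powersetCard.mpr ⟨hS, S.2⟩
  · intro S hS T hT h
    exact Subtype.ext h
  · intro s hs
    obtain ⟨hsub, hcard⟩ := Finset.mem_powersetCard.mp hs
    exact ⟨⟨s, hcard⟩, by simpa using hsub, rfl⟩

lemma alt_sum (t d : ℕ) (hd : d ≤ t) :
    ∑ i ∈ Finset.range (t + 1), (-1 : ℤ) ^ i * (d.choose i : ℤ) =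
      if d = 0 then 1 else 0 := by
  rw [← Int.alternating_sum_range_choose (n := d)]
  symm
  apply Finset.sum_subset (Finset.range_subset_range.mpr (by omega))
  intro i _ hi
  rw [Nat.choose_eq_zero_of_lt (by simpa using hi)]
  simp

/-- for `t ≤ k` with `t + k ≤ n`,
`W_{t,k} = Σ_{i=0}^t (-1)^i W_{i,t}ᵀ W̄_{i,k}` and
`W̄_{t,k} = Σ_{i=0}^t (-1)^i W_{i,t}ᵀ W_{i,k}`. -/
theorem incl_disj_inversion (n t k : ℕ) (htk : t ≤ k) (hkn : t + k ≤ n) :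
    inclMatrix n t k =
      ∑ i ∈ Finset.range (t + 1),
        (-1 : ℤ) ^ i • ((inclMatrix n i t)ᵀ * disjMatrix n i k) ∧
    disjMatrix n t k =
      ∑ i ∈ Finset.range (t + 1),
        (-1 : ℤ) ^ i • ((inclMatrix n i t)ᵀ * inclMatrix n i k) := by
  classical
  constructor
  · ext A B
    rw [Matrix.sum_apply]
    have hentry : ∀ i ∈ Finset.range (t + 1),
        ((-1 : ℤ) ^ i • ((inclMatrix n i t)ᵀ * disjMatrix n i k)) A B =
          (-1 : ℤ) ^ i * ((((A : Finset (Fin n)) \ B).card).choose i : ℤ) := by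
      intro i _
      rw [Matrix.smul_apply, smul_eq_mul]
      congr 1
      rw [Matrix.mul_apply]
      rw [← count_subsets n i ((A : Finset (Fin n)) \ B)]
      apply Finset.sum_congr rfl
      intro S _
      simp only [inclMatrix, disjMatrix, transpose_apply, of_apply]
      by_cases h : (S : Finset (Fin n)) ⊆ (A : Finset (Fin n)) \ B
      · obtain ⟨h1, h2⟩ := Finset.subset_sdiff.mp h
        simp [h, h1, h2]
      · rw [if_neg h]
        rw [Finset.subset_sdiff] at h
        push_neg at h
        by_cases h1 : (S : Finset (Fin n)) ⊆ A
        · simp [h1, h h1]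
        · simp [h1]
    rw [Finset.sum_congr rfl hentry, alt_sum t _ (by
      calc ((A : Finset (Fin n)) \ B).card ≤ (A : Finset (Fin n)).card :=
            Finset.card_le_card (Finset.sdiff_subset)
        _ = t := A.2)]
    simp only [inclMatrix, of_apply, Finset.card_eq_zero, Finset.sdiff_eq_empty_iff_subset]
  · ext A B
    rw [Matrix.sum_apply]
    have hentry : ∀ i ∈ Finset.range (t + 1),
        ((-1 : ℤ) ^ i • ((inclMatrix n i t)ᵀ * inclMatrix n i k)) A B =
          (-1 : ℤ) ^ i * ((((A : Finset (Fin n)) ∩ B).card).choose i : ℤ) := by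
      intro i _
      rw [Matrix.smul_apply, smul_eq_mul]
      congr 1
      rw [Matrix.mul_apply]
      rw [← count_subsets n i ((A : Finset (Fin n)) ∩ B)]
      apply Finset.sum_congr rfl
      intro S _
      simp only [inclMatrix, transpose_apply, of_apply]
      by_cases h : (S : Finset (Fin n)) ⊆ (A : Finset (Fin n)) ∩ B
      · obtain ⟨h1, h2⟩ := Finset.subset_inter_iff.mp h
        simp [h, h1, h2]
      · rw [if_neg h]
        rw [Finset.subset_inter_iff] at h
        push_neg at h
        by_cases h1 : (S : Finset (Fin n)) ⊆ A
        · simp [h1, h h1]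
        · simp [h1]
    rw [Finset.sum_congr rfl hentry, alt_sum t _ (by
      calc ((A : Finset (Fin n)) ∩ B).card ≤ (A : Finset (Fin n)).card :=
            Finset.card_le_card (Finset.inter_subset_left)
        _ = t := A.2)]
    simp only [disjMatrix, of_apply, Finset.card_eq_zero, ← Finset.disjoint_iff_inter_eq_empty]
end
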